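/- arXiv:2501.15157 — 3 statements merged into one kernel-verified Lean document; each statement's English description precedes it below -/
import Mathlib

section
/- Sampling error bound: let f be an α-Hölder probability density (constant c_L, α ∈ (0,1]) of the measure P, supported in B_r := [−r,r]^d, and let π^1,…,π^T be T i.i.d. random tree partitions of B_r of depth p, with A_p^t(x) the cell of π^t containing x. Set c₁ := ‖f‖_∞ + c_L (2r√d)^α. Then for every τ > 0, with probability at least 1 − e^{−τ} over the T random partitions, sup_{x ∈ B_r} | (1/T)∑_{t=1}^T P(A_p^t(x))/μ(A_p^t(x)) − E_{P_Z}[ P(A_p(x))/μ(A_p(x)) ] | ≤ √( 2 c₁² (τ + p d log 2) / T ) + 2 (τ + p d log 2) / (3T), where E_{P_Z} denotes expectation over a single random tree partition of depth p. -/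
open MeasureTheory ProbabilityTheory Real Filter Finset
open scoped ENNReal Classical

namespace MFRDE

noncomputable section

/-- Euclidean distance on `Fin d → ℝ`. -/
def eDist {d : ℕ} (x y : Fin d → ℝ) : ℝ := Real.sqrt (∑ j, (x j - y j) ^ 2)

/-- `f` is `α`-Hölder continuous with constant `c_L` (w.r.t. the Euclidean distance). -/
def Holder {d : ℕ} (f : (Fin d → ℝ) → ℝ) (c_L α : ℝ) : Prop :=
  ∀ x y, |f x - f y| ≤ c_L * eDist x y ^ α

/-- The closed box `B_r = [-r, r]^d`. -/
def Box (d : ℕ) (r : ℝ) : Set (Fin d → ℝ) := {x | ∀ j, x j ∈ Set.Icc (-r) r}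

/-- A dyadic sub-box of `[-r,r]^d`, recorded by per-coordinate split counts `s`
and dyadic positions `k`. -/
structure DBox (d : ℕ) where
  s : Fin d → ℕ
  k : Fin d → ℕ

/-- The root box, representing all of `[-r,r]^d`. -/
def DBox.root (d : ℕ) : DBox d := ⟨fun _ => 0, fun _ => 0⟩

/-- The subset of `ℝ^d` represented by a dyadic box. -/
def DBox.toSet {d : ℕ} (B : DBox d) (r : ℝ) : Set (Fin d → ℝ) :=
  {x | ∀ j, x j ∈ Set.Ico (-r + 2 * r * B.k j / 2 ^ B.s j)
      (-r + 2 * r * (B.k j + 1) / 2 ^ B.s j)}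

/-- Split a dyadic box at the midpoint of its side in coordinate `j`, keeping the
lower (`b = false`) or upper (`b = true`) half. -/
def DBox.split {d : ℕ} (B : DBox d) (j : Fin d) (b : Bool) : DBox d :=
  ⟨Function.update B.s j (B.s j + 1),
   Function.update B.k j (2 * B.k j + if b then 1 else 0)⟩

/-- Midpoint of the side of the box in coordinate `j`. -/
def DBox.mid {d : ℕ} (B : DBox d) (r : ℝ) (j : Fin d) : ℝ :=
  -r + r * (2 * B.k j + 1) / 2 ^ B.s j

/-- The randomness driving a depth-`p` random tree partition: in each round `k < p`,
every current cell — identified by the binary string of length `k` recording the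
successive halves it arose from — independently picks one of the `d` coordinates
uniformly at random. -/
def TC (d p : ℕ) : Type := (k : Fin p) → (Fin k.1 → Bool) → Fin d

instance (d p : ℕ) : Fintype (TC d p) :=
  inferInstanceAs (Fintype ((k : Fin p) → (Fin k.1 → Bool) → Fin d))

instance (d p : ℕ) : MeasurableSpace (TC d p) := ⊤

instance (n : ℕ) : MeasurableSpace (Equiv.Perm (Fin n)) := ⊤

/-- Recursive construction of the cell containing `x` in the random tree partition of
`[-r,r]^d`: at round `k`, the current cell containing `x` (together with its binary
history) is split at the midpoint of the coordinate chosen by `ω`, and the half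
containing `x` is kept. -/
def trace {d : ℕ} (r : ℝ) {p : ℕ} (ω : TC d p) (x : Fin d → ℝ) : ℕ → DBox d × (ℕ → Bool)
  | 0 => (DBox.root d, fun _ => false)
  | k + 1 =>
    let prev := trace r ω x k
    if h : k < p then
      let j := ω ⟨k, h⟩ fun i => prev.2 i.1
      let b : Bool := if prev.1.mid r j ≤ x j then true else false
      (prev.1.split j b, Function.update prev.2 k b)
    else prev

/-- The cell of the depth-`p` random tree partition of `[-r,r]^d` (driven by the
randomness `ω`) containing the point `x`. -/
def cellOf {d : ℕ} (r : ℝ) {p : ℕ} (ω : TC d p) (x : Fin d → ℝ) : DBox d :=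
  (trace r ω x p).1

/-- The uniform probability measure on a finite type. -/
def unif (α : Type*) [Fintype α] [MeasurableSpace α] : Measure α :=
  (Fintype.card α : ℝ≥0∞)⁻¹ • Measure.count

/-- The forest density estimator built from the sample points `Y i`, `i ∈ Bs`
(normalized by the number of points used, `Bs.card`), with the `T` random tree
partitions driven by `ωs`. -/
def fDE {d n : ℕ} (r : ℝ) {p T : ℕ} (ωs : Fin T → TC d p) (Y : Fin n → Fin d → ℝ)
    (Bs : Finset (Fin n)) (x : Fin d → ℝ) : ℝ :=
  (T : ℝ)⁻¹ * ∑ t, ((Bs.filter fun i => Y i ∈ (cellOf r (ωs t) x).toSet r).card : ℝ) /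
    (Bs.card * (volume ((cellOf r (ωs t) x).toSet r)).toReal)

/-- The `j`-th smallest entry of the tuple `y` (the `j`-th order statistic). -/
def orderStat {S : ℕ} (y : Fin S → ℝ) (j : ℕ) : ℝ :=
  sInf {t : ℝ | j ≤ (Finset.univ.filter fun s => y s ≤ t).card}

/-- The block with index `s` obtained from the random permutation `σ` of `{1,…,n}`:
the `s`-th consecutive segment of length `m` of the permuted indices. -/
def blockSet {n : ℕ} (m : ℕ) (σ : Equiv.Perm (Fin n)) (s : ℕ) : Finset (Fin n) :=
  Finset.univ.filter fun i => (σ.symm i : ℕ) / m = s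

/-- The pointwise median (the `⌈S/2⌉`-th smallest value) of the `S` subsampled forest
density estimators. -/
def Mmed {d n : ℕ} (r : ℝ) {p T : ℕ} (S m : ℕ) (ωs : Fin T → TC d p)
    (Y : Fin n → Fin d → ℝ) (σ : Equiv.Perm (Fin n)) (x : Fin d → ℝ) : ℝ :=
  orderStat (fun s : Fin S => fDE r ωs Y (blockSet m σ s.1) x) ((S + 1) / 2)

/-- The MFRDE estimator: the pointwise median of the block forest estimators,
normalized by its integral over `B_r`. -/
def fM {d n : ℕ} (r : ℝ) {p T : ℕ} (S m : ℕ) (ωs : Fin T → TC d p)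
    (Y : Fin n → Fin d → ℝ) (σ : Equiv.Perm (Fin n)) (x : Fin d → ℝ) : ℝ :=
  Mmed r S m ωs Y σ x / ∫ z in Box d r, Mmed r S m ωs Y σ z

/-- `α' = (1 - 2^{-α})/log 2`. -/
def alpha' (α : ℝ) : ℝ := (1 - 2 ^ (-α)) / Real.log 2

/-- `γ₁ = α'/(d + 2α')`. -/
def gamma1 (d : ℕ) (α : ℝ) : ℝ := alpha' α / (d + 2 * alpha' α)

/-- `γ₂ = (d + 2α')/((1-β)d + 2(1+β)α')`. -/
def gamma2 (d : ℕ) (α β : ℝ) : ℝ :=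
  (d + 2 * alpha' α) / ((1 - β) * d + 2 * (1 + β) * alpha' α)

/-- Assumption 1 (outlier proportion exponent): for every measurable `A ⊆ B_r` of
positive volume, the proportion of outliers falling in `A` is bounded by
`c_U · max((μ(A)/μ(B_r))^β, (log n)/|O|)`. -/
def A1event {d n : ℕ} (r β c_U : ℝ) (O : Finset (Fin n)) (Y : Fin n → Fin d → ℝ) : Prop :=
  ∀ A : Set (Fin d → ℝ), MeasurableSet A → A ⊆ Box d r → 0 < volume A →
    ((O.filter fun i => Y i ∈ A).card : ℝ) / O.card ≤
      c_U * max ((volume A / volume (Box d r)).toReal ^ β) (Real.log n / O.card)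

end

end MFRDE

namespace MFRDE
section Aux

lemma two_point_mgf (q h : ℝ) (hq0 : 0 ≤ q) (hq1 : q ≤ 1) :
    (1 - q) * Real.exp (-q * h) + q * Real.exp ((1 - q) * h) ≤ Real.exp (h ^ 2 / 8) := by
  set u : ℝ → ℝ := fun h => 1 - q + q * Real.exp h with hu
  set G : ℝ → ℝ := fun h => h ^ 2 / 8 - Real.log (u h) + q * h with hG
  set G' : ℝ → ℝ := fun h => h / 4 - q * Real.exp h / u h + q with hG'
  have hupos : ∀ h, 0 < u h := by
    intro h
    show 0 < 1 - q + q * Real.exp h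
    rcases eq_or_lt_of_le hq0 with hq | hq
    · simp [← hq]
    · have := Real.exp_pos h
      nlinarith
  have hdu : ∀ h, HasDerivAt u (q * Real.exp h) h := by
    intro h
    rw [hu]
    simpa using ((Real.hasDerivAt_exp h).const_mul q).const_add (1 - q)
  have hdG : ∀ h, HasDerivAt G (G' h) h := by
    intro h
    have hlog : HasDerivAt (fun h => Real.log (u h)) (q * Real.exp h / u h) h :=
      (hdu h).log (hupos h).ne'
    have h1 : HasDerivAt (fun h : ℝ => h ^ 2 / 8) (h / 4) h := by
      have := (hasDerivAt_pow 2 h).div_const 8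
      refine this.congr_deriv ?_
      push_cast; ring
    have h2 : HasDerivAt (fun h : ℝ => q * h) q h := by
      simpa using (hasDerivAt_id h).const_mul q
    rw [hG, hG']
    exact (h1.sub hlog).add h2
  have hdG' : ∀ h, HasDerivAt G' (1 / 4 - q * Real.exp h * (1 - q) / (u h) ^ 2) h := by
    intro h
    have hnum : HasDerivAt (fun h => q * Real.exp h) (q * Real.exp h) h :=
      (Real.hasDerivAt_exp h).const_mul q
    have hdiv : HasDerivAt (fun h => q * Real.exp h / u h)
        ((q * Real.exp h * u h - q * Real.exp h * (q * Real.exp h)) / (u h) ^ 2) h :=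
      hnum.div (hdu h) (hupos h).ne'
    have h1 : HasDerivAt (fun h : ℝ => h / 4) (1 / 4) h := by
      simpa using (hasDerivAt_id h).div_const 4
    have heq : (q * Real.exp h * u h - q * Real.exp h * (q * Real.exp h)) / (u h) ^ 2
        = q * Real.exp h * (1 - q) / (u h) ^ 2 := by
      rw [hu]; ring_nf
    have := (h1.sub hdiv).add_const q
    rw [heq] at this
    rw [hG']
    exact this
  have hG''nonneg : ∀ h, 0 ≤ 1 / 4 - q * Real.exp h * (1 - q) / (u h) ^ 2 := by
    intro h
    have h2 : 0 < (u h) ^ 2 := pow_pos (hupos h) 2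
    rw [sub_nonneg, div_le_iff₀ h2, hu]
    have := Real.exp_pos h
    nlinarith [sq_nonneg (1 - q - q * Real.exp h)]
  have hG'mono : Monotone G' := by
    refine monotone_of_deriv_nonneg (fun h => (hdG' h).differentiableAt) fun h => ?_
    rw [(hdG' h).deriv]; exact hG''nonneg h
  have hG'0 : G' 0 = 0 := by
    rw [hG']
    simp only [hu]
    norm_num
  have hGdiff : Differentiable ℝ G := fun h => (hdG h).differentiableAt
  have hG0 : G 0 = 0 := by
    rw [hG]
    simp only [hu]
    norm_num
  have key : ∀ h, 0 ≤ G h := by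
    intro h
    rcases le_total 0 h with hh | hh
    · have hmono : MonotoneOn G (Set.Ici 0) := by
        refine monotoneOn_of_deriv_nonneg (convex_Ici 0) hGdiff.continuous.continuousOn
          hGdiff.differentiableOn fun x hx => ?_
        rw [(hdG x).deriv]
        rw [interior_Ici] at hx
        have := hG'mono (le_of_lt hx)
        rw [hG'0] at this; exact this
      have := hmono Set.self_mem_Ici hh hh
      rwa [hG0] at this
    · have hmono : AntitoneOn G (Set.Iic 0) := by
        refine antitoneOn_of_deriv_nonpos (convex_Iic 0) hGdiff.continuous.continuousOn
          hGdiff.differentiableOn fun x hx => ?_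
        rw [(hdG x).deriv]
        rw [interior_Iic] at hx
        have := hG'mono (le_of_lt hx)
        rw [hG'0] at this; exact this
      have := hmono hh Set.self_mem_Iic hh
      rwa [hG0] at this
  have hgoal : 0 ≤ h ^ 2 / 8 - Real.log (u h) + q * h := by
    have := key h; rwa [hG] at this
  have hupos' := hupos h
  have hlog_le : Real.log (u h) - q * h ≤ h ^ 2 / 8 := by linarith
  calc (1 - q) * Real.exp (-q * h) + q * Real.exp ((1 - q) * h)
      = Real.exp (Real.log (u h) - q * h) := by
        rw [Real.exp_sub, Real.exp_log hupos', hu]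
        have e1 : Real.exp (-q * h) = (Real.exp (q * h))⁻¹ := by
          rw [← Real.exp_neg]; ring_nf
        have e2 : Real.exp ((1 - q) * h) = Real.exp h * (Real.exp (q * h))⁻¹ := by
          rw [← Real.exp_neg, ← Real.exp_add]; ring_nf
        rw [e1, e2]
        field_simp
    _ ≤ Real.exp (h ^ 2 / 8) := Real.exp_le_exp.2 hlog_le

lemma chernoff_count {Ω : Type*} [Fintype Ω] [Nonempty Ω] (T : ℕ) (hT : 0 < T)
    (g : Ω → ℝ) (c ε : ℝ) (hc : 0 < c) (hg0 : ∀ ω, 0 ≤ g ω) (hgc : ∀ ω, g ω ≤ c) (hε : 0 ≤ ε) :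
    ((Finset.univ.filter fun ωs : Fin T → Ω =>
        ε ≤ (T : ℝ)⁻¹ * ∑ t, g (ωs t) - (∑ ω, g ω) / (Fintype.card Ω)).card : ℝ) ≤
      Real.exp (-(2 * T * ε ^ 2 / c ^ 2)) * (Fintype.card Ω) ^ T := by
  classical
  set κ : ℝ := (Fintype.card Ω : ℝ) with hκ
  have hκpos : 0 < κ := by
    rw [hκ]; exact_mod_cast Fintype.card_pos
  set m : ℝ := (∑ ω, g ω) / κ with hm
  have hsumg : ∑ ω, g ω = κ * m := by rw [hm]; field_simp
  have hm0 : 0 ≤ m := div_nonneg (Finset.sum_nonneg fun ω _ => hg0 ω) hκpos.le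
  have hmc : m ≤ c := by
    rw [hm, div_le_iff₀ hκpos]
    calc ∑ ω, g ω ≤ ∑ _ω : Ω, c := Finset.sum_le_sum fun ω _ => hgc ω
      _ = c * κ := by rw [Finset.sum_const, nsmul_eq_mul, Finset.card_univ]; ring
  set lam : ℝ := 4 * ε / c ^ 2 with hlam
  have hlam0 : 0 ≤ lam := div_nonneg (by linarith) (by positivity)
  set q : ℝ := m / c with hq
  have hmq : m = q * c := by rw [hq]; field_simp
  have hq0 : 0 ≤ q := div_nonneg hm0 hc.le
  have hq1 : q ≤ 1 := (div_le_one hc).2 hmc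
  set E1 : ℝ := Real.exp (-q * (lam * c)) with hE1
  set E2 : ℝ := Real.exp ((1 - q) * (lam * c)) with hE2
  -- Step A : mgf bound
  have keyA : ∑ ω, Real.exp (lam * (g ω - m)) ≤ κ * Real.exp (lam ^ 2 * c ^ 2 / 8) := by
    have step1 : ∀ ω, Real.exp (lam * (g ω - m)) ≤ (c - g ω) / c * E1 + g ω / c * E2 := by
      intro ω
      have hw1 : 0 ≤ (c - g ω) / c := div_nonneg (by linarith [hgc ω]) hc.le
      have hw2 : 0 ≤ g ω / c := div_nonneg (hg0 ω) hc.le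
      have hsum : (c - g ω) / c + g ω / c = 1 := by field_simp; ring
      have hcvx := convexOn_exp.2 (Set.mem_univ (-q * (lam * c)))
        (Set.mem_univ ((1 - q) * (lam * c))) hw1 hw2 hsum
      have harg : ((c - g ω) / c) • (-q * (lam * c)) + (g ω / c) • ((1 - q) * (lam * c))
          = lam * (g ω - m) := by
        rw [smul_eq_mul, smul_eq_mul, hmq]
        field_simp
        ring
      rw [harg] at hcvx
      simpa [smul_eq_mul, hE1, hE2] using hcvx
    calc ∑ ω, Real.exp (lam * (g ω - m)) ≤ ∑ ω, ((c - g ω) / c * E1 + g ω / c * E2) :=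
          Finset.sum_le_sum fun ω _ => step1 ω
      _ = (∑ ω, (c - g ω)) * (E1 / c) + (∑ ω, g ω) * (E2 / c) := by
          rw [Finset.sum_add_distrib, ← Finset.sum_mul, ← Finset.sum_mul]
          congr 1 <;> · rw [← Finset.sum_div]; ring
      _ = κ * ((1 - q) * E1 + q * E2) := by
          rw [Finset.sum_sub_distrib, Finset.sum_const, nsmul_eq_mul, Finset.card_univ, ← hκ,
            hsumg, hmq]
          field_simp
      _ ≤ κ * Real.exp ((lam * c) ^ 2 / 8) := by
          apply mul_le_mul_of_nonneg_left _ hκpos.le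
          simpa [hE1, hE2] using two_point_mgf q (lam * c) hq0 hq1
      _ = κ * Real.exp (lam ^ 2 * c ^ 2 / 8) := by ring_nf
  -- Step B : Chernoff counting
  set P : (Fin T → Ω) → Prop := fun ωs => ε ≤ (T : ℝ)⁻¹ * ∑ t, g (ωs t) - (∑ ω, g ω) / κ
    with hP
  have stepB : ((Finset.univ.filter P).card : ℝ) * Real.exp (lam * (T * ε)) ≤
      (∑ ω, Real.exp (lam * (g ω - m))) ^ T := by
    rw [Fintype.sum_pow]
    calc ((Finset.univ.filter P).card : ℝ) * Real.exp (lam * (T * ε))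
        = ∑ _ωs ∈ Finset.univ.filter P, Real.exp (lam * (T * ε)) := by
          rw [Finset.sum_const, nsmul_eq_mul]
      _ ≤ ∑ ωs ∈ Finset.univ.filter P, ∏ t, Real.exp (lam * (g (ωs t) - m)) := by
          apply Finset.sum_le_sum
          intro ωs hωs
          rw [Finset.mem_filter] at hωs
          have hdev : ε ≤ (T : ℝ)⁻¹ * ∑ t, g (ωs t) - m := by
            have := hωs.2; rw [hP] at this; exact this
          have hTpos : (0 : ℝ) < T := by exact_mod_cast hT
          have hsum : (T : ℝ) * ε ≤ ∑ t, (g (ωs t) - m) := by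
            rw [Finset.sum_sub_distrib, Finset.sum_const, Finset.card_univ, Fintype.card_fin,
              nsmul_eq_mul]
            have h2 : (T : ℝ) * ε ≤ (T : ℝ) * ((T : ℝ)⁻¹ * ∑ t, g (ωs t) - m) :=
              mul_le_mul_of_nonneg_left hdev hTpos.le
            calc (T : ℝ) * ε ≤ (T : ℝ) * ((T : ℝ)⁻¹ * ∑ t, g (ωs t) - m) := h2
              _ = ∑ t, g (ωs t) - (T : ℝ) * m := by field_simp
          rw [← Real.exp_sum]
          apply Real.exp_le_exp.2
          rw [← Finset.mul_sum]
          calc lam * (T * ε) ≤ lam * ∑ t, (g (ωs t) - m) :=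
            mul_le_mul_of_nonneg_left hsum hlam0
            _ = _ := rfl
      _ ≤ ∑ ωs : Fin T → Ω, ∏ t, Real.exp (lam * (g (ωs t) - m)) := by
          apply Finset.sum_le_sum_of_subset_of_nonneg (Finset.filter_subset _ _)
          intro ωs _ _
          exact Finset.prod_nonneg fun t _ => (Real.exp_pos _).le
  -- combine
  have hsumnn : 0 ≤ ∑ ω, Real.exp (lam * (g ω - m)) :=
    Finset.sum_nonneg fun ω _ => (Real.exp_pos _).le
  have hpow : (∑ ω, Real.exp (lam * (g ω - m))) ^ T ≤
      (κ * Real.exp (lam ^ 2 * c ^ 2 / 8)) ^ T :=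
    pow_le_pow_left₀ hsumnn keyA T
  have hfinal : ((Finset.univ.filter P).card : ℝ) * Real.exp (lam * (T * ε)) ≤
      κ ^ T * Real.exp (lam ^ 2 * c ^ 2 / 8) ^ T := by
    calc _ ≤ _ := stepB
      _ ≤ (κ * Real.exp (lam ^ 2 * c ^ 2 / 8)) ^ T := hpow
      _ = κ ^ T * Real.exp (lam ^ 2 * c ^ 2 / 8) ^ T := mul_pow _ _ _
  have hexp : Real.exp (lam ^ 2 * c ^ 2 / 8) ^ T * Real.exp (-(lam * (T * ε))) =
      Real.exp (-(2 * T * ε ^ 2 / c ^ 2)) := by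
    rw [← Real.exp_nat_mul, ← Real.exp_add]
    congr 1
    rw [hlam]
    field_simp
    ring
  have hEpos : 0 < Real.exp (lam * (T * ε)) := Real.exp_pos _
  rw [← le_div_iff₀ hEpos] at hfinal
  calc ((Finset.univ.filter P).card : ℝ)
      ≤ κ ^ T * Real.exp (lam ^ 2 * c ^ 2 / 8) ^ T / Real.exp (lam * (T * ε)) := hfinal
    _ = Real.exp (-(2 * T * ε ^ 2 / c ^ 2)) * κ ^ T := by
        rw [div_eq_mul_inv, ← Real.exp_neg, mul_assoc, hexp]; ring

lemma chernoff_abs {Ω : Type*} [Fintype Ω] [Nonempty Ω] (T : ℕ) (hT : 0 < T)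
    (g : Ω → ℝ) (c ε : ℝ) (hc : 0 < c) (hg0 : ∀ ω, 0 ≤ g ω) (hgc : ∀ ω, g ω ≤ c) (hε : 0 ≤ ε) :
    ((Finset.univ.filter fun ωs : Fin T → Ω =>
        ¬ |(T : ℝ)⁻¹ * ∑ t, g (ωs t) - (∑ ω, g ω) / (Fintype.card Ω)| ≤ ε).card : ℝ) ≤
      2 * Real.exp (-(2 * T * ε ^ 2 / c ^ 2)) * (Fintype.card Ω) ^ T := by
  classical
  have hκpos : (0 : ℝ) < Fintype.card Ω := by exact_mod_cast Fintype.card_pos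
  have hTpos : (0 : ℝ) < T := by exact_mod_cast hT
  set g' : Ω → ℝ := fun ω => c - g ω with hg'
  have hflip : ∀ ωs : Fin T → Ω,
      (T : ℝ)⁻¹ * ∑ t, g' (ωs t) - (∑ ω, g' ω) / (Fintype.card Ω) =
        -((T : ℝ)⁻¹ * ∑ t, g (ωs t) - (∑ ω, g ω) / (Fintype.card Ω)) := by
    intro ωs
    rw [hg']
    rw [Finset.sum_sub_distrib, Finset.sum_sub_distrib, Finset.sum_const, Finset.sum_const,
      Finset.card_univ, Finset.card_univ, Fintype.card_fin, nsmul_eq_mul, nsmul_eq_mul]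
    field_simp
    ring
  set A := Finset.univ.filter fun ωs : Fin T → Ω =>
    ε ≤ (T : ℝ)⁻¹ * ∑ t, g (ωs t) - (∑ ω, g ω) / (Fintype.card Ω) with hA
  set B := Finset.univ.filter fun ωs : Fin T → Ω =>
    ε ≤ (T : ℝ)⁻¹ * ∑ t, g' (ωs t) - (∑ ω, g' ω) / (Fintype.card Ω) with hB
  have hsub : (Finset.univ.filter fun ωs : Fin T → Ω =>
      ¬ |(T : ℝ)⁻¹ * ∑ t, g (ωs t) - (∑ ω, g ω) / (Fintype.card Ω)| ≤ ε) ⊆ A ∪ B := by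
    intro ωs hωs
    rw [Finset.mem_filter] at hωs
    have h1 : ε < |(T : ℝ)⁻¹ * ∑ t, g (ωs t) - (∑ ω, g ω) / (Fintype.card Ω)| :=
      lt_of_not_ge hωs.2
    rw [Finset.mem_union, hA, hB, Finset.mem_filter, Finset.mem_filter]
    rcases abs_cases ((T : ℝ)⁻¹ * ∑ t, g (ωs t) - (∑ ω, g ω) / (Fintype.card Ω)) with
      ⟨habs, _⟩ | ⟨habs, _⟩
    · left
      exact ⟨Finset.mem_univ _, by rw [← habs]; exact h1.le⟩
    · right
      refine ⟨Finset.mem_univ _, ?_⟩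
      rw [hflip ωs]
      rw [← habs]
      exact h1.le
  have hcardA := chernoff_count T hT g c ε hc hg0 hgc hε
  have hcardB := chernoff_count T hT g' c ε hc
    (fun ω => by rw [hg']; simp only []; linarith [hgc ω])
    (fun ω => by rw [hg']; simp only []; linarith [hg0 ω]) hε
  calc ((Finset.univ.filter fun ωs : Fin T → Ω =>
        ¬ |(T : ℝ)⁻¹ * ∑ t, g (ωs t) - (∑ ω, g ω) / (Fintype.card Ω)| ≤ ε).card : ℝ)
      ≤ ((A ∪ B).card : ℝ) := by exact_mod_cast Finset.card_le_card hsub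
    _ ≤ ((A.card : ℝ) + (B.card : ℝ)) := by exact_mod_cast Finset.card_union_le A B
    _ ≤ 2 * Real.exp (-(2 * T * ε ^ 2 / c ^ 2)) * (Fintype.card Ω) ^ T := by
        rw [hA, hB]
        have := hcardA
        have := hcardB
        nlinarith [Real.exp_pos (-(2 * T * ε ^ 2 / c ^ 2)),
          pow_pos hκpos T]


lemma union_chernoff {Ω : Type*} [Fintype Ω] [Nonempty Ω] {I : Type*} [Fintype I]
    (T : ℕ) (hT : 0 < T) (G : I → Ω → ℝ) (c ε : ℝ) (hc : 0 < c)
    (hg0 : ∀ i ω, 0 ≤ G i ω) (hgc : ∀ i ω, G i ω ≤ c) (hε : 0 ≤ ε) :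
    ((Finset.univ.filter fun ωs : Fin T → Ω => ¬ ∀ i : I,
        |(T : ℝ)⁻¹ * ∑ t, G i (ωs t) - (∑ ω, G i ω) / (Fintype.card Ω)| ≤ ε).card : ℝ) ≤
      (Fintype.card I) * (2 * Real.exp (-(2 * T * ε ^ 2 / c ^ 2)) * (Fintype.card Ω) ^ T) := by
  classical
  have hsub : (Finset.univ.filter fun ωs : Fin T → Ω => ¬ ∀ i : I,
      |(T : ℝ)⁻¹ * ∑ t, G i (ωs t) - (∑ ω, G i ω) / (Fintype.card Ω)| ≤ ε) ⊆
      Finset.univ.biUnion fun i : I => Finset.univ.filter fun ωs : Fin T → Ω =>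
        ¬ |(T : ℝ)⁻¹ * ∑ t, G i (ωs t) - (∑ ω, G i ω) / (Fintype.card Ω)| ≤ ε := by
    intro ωs hωs
    rw [Finset.mem_filter] at hωs
    push_neg at hωs
    obtain ⟨i, hi⟩ := hωs.2
    rw [Finset.mem_biUnion]
    exact ⟨i, Finset.mem_univ _, Finset.mem_filter.2 ⟨Finset.mem_univ _, not_le.2 hi⟩⟩
  calc ((Finset.univ.filter fun ωs : Fin T → Ω => ¬ ∀ i : I,
        |(T : ℝ)⁻¹ * ∑ t, G i (ωs t) - (∑ ω, G i ω) / (Fintype.card Ω)| ≤ ε).card : ℝ)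
      ≤ (((Finset.univ.biUnion fun i : I => Finset.univ.filter fun ωs : Fin T → Ω =>
          ¬ |(T : ℝ)⁻¹ * ∑ t, G i (ωs t) - (∑ ω, G i ω) / (Fintype.card Ω)| ≤ ε).card : ℕ) : ℝ) :=
        by exact_mod_cast Finset.card_le_card hsub
    _ ≤ ∑ i : I, ((Finset.univ.filter fun ωs : Fin T → Ω =>
          ¬ |(T : ℝ)⁻¹ * ∑ t, G i (ωs t) - (∑ ω, G i ω) / (Fintype.card Ω)| ≤ ε).card : ℝ) := by
        exact_mod_cast Finset.card_biUnion_le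
    _ ≤ ∑ _i : I, (2 * Real.exp (-(2 * T * ε ^ 2 / c ^ 2)) * (Fintype.card Ω) ^ T) :=
        Finset.sum_le_sum fun i _ => chernoff_abs T hT (G i) c ε hc (hg0 i) (hgc i) hε
    _ = (Fintype.card I) * (2 * Real.exp (-(2 * T * ε ^ 2 / c ^ 2)) * (Fintype.card Ω) ^ T) := by
        rw [Finset.sum_const, nsmul_eq_mul, Finset.card_univ]

lemma numeric_key (p d : ℕ) (hp1 : 0 < p) (hd : 0 < d) (τ u : ℝ) (hτ : 0 < τ)
    (hu : u = τ + p * d * Real.log 2) :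
    ((2 : ℝ) ^ p) ^ d * (2 * Real.exp (-(4 * u))) ≤ Real.exp (-τ) := by
  set W : ℝ := (2 : ℝ) ^ (p * d) with hW
  have hWpos : 0 < W := by rw [hW]; positivity
  have hW2 : (2 : ℝ) ≤ W := by
    rw [hW]
    calc (2 : ℝ) = 2 ^ 1 := (pow_one 2).symm
      _ ≤ 2 ^ (p * d) := pow_le_pow_right₀ (by norm_num) (by nlinarith [hp1, hd])
  have hWe : Real.exp ((p * d : ℕ) * Real.log 2) = W := by
    rw [Real.exp_nat_mul, Real.exp_log (by norm_num : (0:ℝ) < 2), hW]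
  have h4u : Real.exp (-(4 * u)) = Real.exp (-(4 * τ)) / W ^ 4 := by
    rw [eq_div_iff (by positivity)]
    rw [← hWe, ← Real.exp_nat_mul, ← Real.exp_add]
    congr 1
    rw [hu]
    push_cast
    ring
  have hWW : ((2 : ℝ) ^ p) ^ d = W := by rw [hW, ← pow_mul]
  rw [hWW, h4u]
  have heq : W * (2 * (Real.exp (-(4 * τ)) / W ^ 4)) =
      2 * Real.exp (-(4 * τ)) / W ^ 3 := by
    field_simp
  rw [heq, div_le_iff₀ (by positivity)]
  have h2 : Real.exp (-(4 * τ)) ≤ Real.exp (-τ) := Real.exp_le_exp.2 (by linarith)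
  have h3 : (8 : ℝ) ≤ W ^ 3 := by
    calc (8 : ℝ) = 2 ^ 3 := by norm_num
      _ ≤ W ^ 3 := pow_le_pow_left₀ (by norm_num) hW2 3
  nlinarith [Real.exp_pos (-τ), Real.exp_pos (-(4 * τ))]

end Aux
end MFRDE

namespace MFRDE
noncomputable section
variable {d : ℕ}

/-- Key geometric lemma: if `x` and `y` compare identically with all level-`p`
dyadic thresholds, then their traces agree. -/
lemma trace_eq {p : ℕ} (r : ℝ) (hr : 0 < r) (x y : Fin d → ℝ)
    (hxy : ∀ (j : Fin d) (M : ℕ), 1 ≤ M → M ≤ 2 ^ p - 1 →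
      ((-r + 2 * r * M / 2 ^ p ≤ x j) ↔ (-r + 2 * r * M / 2 ^ p ≤ y j)))
    (ω : TC d p) (n : ℕ) (hn : n ≤ p) :
    trace r ω x n = trace r ω y n ∧
      ∀ j, (trace r ω x n).1.k j < 2 ^ ((trace r ω x n).1.s j) ∧
        (trace r ω x n).1.s j ≤ n := by
  induction n with
  | zero =>
    refine ⟨rfl, fun j => ?_⟩
    simp [trace, DBox.root]
  | succ n ih =>
    obtain ⟨heq, hinv⟩ := ih (Nat.le_of_succ_le hn)
    have hnp : n < p := hn
    set prev := trace r ω x n with hprev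
    have hmid : ∀ j : Fin d, (prev.1.mid r j ≤ x j) ↔ (prev.1.mid r j ≤ y j) := by
      intro j
      set s := prev.1.s j with hs
      set k := prev.1.k j with hk
      have hks : k < 2 ^ s := (hinv j).1
      have hsn : s ≤ n := (hinv j).2
      have hsp : s + 1 ≤ p := by omega
      set M : ℕ := (2 * k + 1) * 2 ^ (p - s - 1) with hM
      have hpow : 2 ^ (p - s - 1) * 2 ^ (s + 1) = 2 ^ p := by
        rw [← pow_add]
        congr 1
        omega
      have hM1 : 1 ≤ M :=
        Nat.one_le_iff_ne_zero.mpr (Nat.mul_ne_zero (by omega) (by positivity))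
      have hM2 : M ≤ 2 ^ p - 1 := by
        have h1 : 2 * k + 1 ≤ 2 ^ (s + 1) - 1 := by
          have := hks; omega
        have h2 : M ≤ (2 ^ (s + 1) - 1) * 2 ^ (p - s - 1) :=
          Nat.mul_le_mul_right _ h1
        have h3 : (2 ^ (s + 1) - 1) * 2 ^ (p - s - 1) = 2 ^ p - 2 ^ (p - s - 1) := by
          rw [Nat.sub_mul, one_mul, mul_comm, hpow]
        have h4 : (1 : ℕ) ≤ 2 ^ (p - s - 1) := Nat.one_le_two_pow
        omega
      have hmidM : prev.1.mid r j = -r + 2 * r * M / 2 ^ p := by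
        rw [DBox.mid, ← hs, ← hk]
        have h2p : (2 : ℝ) ^ p ≠ 0 := by positivity
        have h2s : (2 : ℝ) ^ s ≠ 0 := by positivity
        have hcast : ((M : ℝ)) = (2 * k + 1) * 2 ^ (p - s - 1) := by
          rw [hM]; push_cast; ring
        have hpexp : p = p - s - 1 + (s + 1) := by omega
        have hpowR : (2 : ℝ) ^ p = 2 ^ (p - s - 1) * 2 ^ s * 2 := by
          calc (2 : ℝ) ^ p = 2 ^ (p - s - 1 + (s + 1)) := by rw [← hpexp]
            _ = 2 ^ (p - s - 1) * 2 ^ s * 2 := by rw [pow_add, pow_succ, ← mul_assoc]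
        congr 1
        rw [hcast, hpowR]
        field_simp
      rw [hmidM]
      exact hxy j M hM1 hM2
    have hstep : ∀ z : Fin d → ℝ, trace r ω z (n + 1) =
        (let pz := trace r ω z n
         let j := ω ⟨n, hnp⟩ fun i => pz.2 i.1
         let b : Bool := if pz.1.mid r j ≤ z j then true else false
         (pz.1.split j b, Function.update pz.2 n b)) := by
      intro z
      simp [trace, hnp]
    rw [hstep x, hstep y]
    simp only [← heq, ← hprev]
    set j0 := ω ⟨n, hnp⟩ fun i => prev.2 i.1 with hj0
    have hbit : (if prev.1.mid r j0 ≤ x j0 then true else false) =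
        (if prev.1.mid r j0 ≤ y j0 then true else false) := by
      by_cases hc : prev.1.mid r j0 ≤ x j0
      · rw [if_pos hc, if_pos ((hmid j0).1 hc)]
      · rw [if_neg hc, if_neg (fun h => hc ((hmid j0).2 h))]
    constructor
    · rw [hbit]
    · intro j
      obtain ⟨hk1, hs1⟩ := hinv j
      obtain ⟨hk0, hs0⟩ := hinv j0
      simp only [DBox.split]
      by_cases hjj : j = j0
      · subst hjj
        rw [Function.update_self, Function.update_self]
        constructor
        · rw [pow_succ]
          split <;> · show _ < _; norm_num; omega
        · omega
      · rw [Function.update_of_ne hjj, Function.update_of_ne hjj]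
        exact ⟨hk1, by omega⟩

/-- Class function: number of active thresholds. -/
def Kcl (r : ℝ) (p : ℕ) (x : Fin d → ℝ) (j : Fin d) : ℕ :=
  Finset.card (Finset.filter (fun M : ℕ => -r + 2 * r * (M : ℝ) / 2 ^ p ≤ x j)
    (Finset.Icc 1 (2 ^ p - 1)))

/-- Representative point of a class. -/
def repPt (r : ℝ) (p : ℕ) (K : Fin d → ℕ) : Fin d → ℝ := fun j => -r + 2 * r * (K j) / 2 ^ p

lemma thresh_mono {p : ℕ} (r : ℝ) (hr : 0 < r) {M M' : ℕ} (h : M ≤ M') :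
    -r + 2 * r * M / 2 ^ p ≤ -r + 2 * r * (M' : ℝ) / 2 ^ p := by
  have : (M : ℝ) ≤ M' := by exact_mod_cast h
  have h2 : (0 : ℝ) < 2 ^ p := by positivity
  gcongr

lemma thresh_iff_Kcl {p : ℕ} (r : ℝ) (hr : 0 < r) (x : Fin d → ℝ) (j : Fin d) (M : ℕ)
    (hM : M ∈ Finset.Icc 1 (2 ^ p - 1)) :
    (-r + 2 * r * M / 2 ^ p ≤ x j) ↔ M ≤ Kcl r p x j := by
  classical
  set S : Finset ℕ :=
    Finset.filter (fun M : ℕ => -r + 2 * r * (M : ℝ) / 2 ^ p ≤ x j)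
      (Finset.Icc 1 (2 ^ p - 1)) with hS
  have hKS : Kcl r p x j = S.card := rfl
  constructor
  · intro h
    have hsub : Finset.Icc 1 M ⊆ S := by
      intro M' hM'
      rw [Finset.mem_Icc] at hM'
      rw [hS]
      rw [Finset.mem_filter, Finset.mem_Icc]
      rw [Finset.mem_Icc] at hM
      exact ⟨⟨hM'.1, le_trans hM'.2 hM.2⟩, le_trans (thresh_mono r hr hM'.2) h⟩
    calc M = (Finset.Icc 1 M).card := by rw [Nat.card_Icc]; omega
      _ ≤ S.card := Finset.card_le_card hsub
      _ = Kcl r p x j := hKS.symm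
  · intro h
    rw [hKS] at h
    have hSne : S.Nonempty := by
      rw [← Finset.card_pos]
      have : 1 ≤ M := (Finset.mem_Icc.1 hM).1
      calc 0 < M := this
        _ ≤ S.card := h
    obtain ⟨Mx, hMx, hmax⟩ := S.exists_max_image (fun M => M) hSne
    have hsub2 : S ⊆ Finset.Icc 1 Mx := by
      intro M' hM'
      rw [Finset.mem_Icc]
      have h1 := (Finset.mem_Icc.1 (Finset.mem_filter.1 hM').1).1
      exact ⟨h1, hmax M' hM'⟩
    have hcard : S.card ≤ Mx := by
      calc S.card ≤ (Finset.Icc 1 Mx).card := Finset.card_le_card hsub2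
        _ = Mx := by rw [Nat.card_Icc]; omega
    have hMMx : M ≤ Mx := le_trans h hcard
    have hMxx : -r + 2 * r * (Mx : ℝ) / 2 ^ p ≤ x j := (Finset.mem_filter.1 hMx).2
    exact le_trans (thresh_mono r hr hMMx) hMxx

lemma Kcl_lt {p : ℕ} (r : ℝ) (x : Fin d → ℝ) (j : Fin d) : Kcl r p x j < 2 ^ p := by
  have h1 : Kcl r p x j ≤ (Finset.Icc 1 (2 ^ p - 1) : Finset ℕ).card := by
    rw [Kcl]
    exact Finset.card_le_card (Finset.filter_subset _ _)
  rw [Nat.card_Icc] at h1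
  have : (1 : ℕ) ≤ 2 ^ p := Nat.one_le_two_pow
  omega

lemma repPt_thresh {p : ℕ} (r : ℝ) (hr : 0 < r) (K : Fin d → ℕ) (j : Fin d) (M : ℕ) :
    (-r + 2 * r * M / 2 ^ p ≤ repPt r p K j) ↔ M ≤ K j := by
  rw [repPt]
  have h2 : (0 : ℝ) < 2 * r / 2 ^ p := by positivity
  constructor
  · intro h
    have hA : 2 * r * (M : ℝ) / 2 ^ p ≤ 2 * r * (K j : ℝ) / 2 ^ p := by linarith
    have hlt : (0:ℝ) < 2 * r := by linarith
    have h2p : (0:ℝ) < (2:ℝ) ^ p := by positivity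
    have hB : 2 * r * (M : ℝ) ≤ 2 * r * (K j : ℝ) := by
      have := mul_le_mul_of_nonneg_right hA (le_of_lt h2p)
      rw [div_mul_cancel₀ _ (ne_of_gt h2p), div_mul_cancel₀ _ (ne_of_gt h2p)] at this
      exact this
    have hMK : (M : ℝ) ≤ K j := le_of_mul_le_mul_left hB hlt
    exact_mod_cast hMK
  · intro h
    exact thresh_mono r hr h

lemma cellOf_class_eq {p : ℕ} (r : ℝ) (hr : 0 < r) (x : Fin d → ℝ) (ω : TC d p) :
    cellOf r ω x = cellOf r ω (repPt r p (Kcl r p x)) := by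
  have hxy : ∀ (j : Fin d) (M : ℕ), 1 ≤ M → M ≤ 2 ^ p - 1 →
      ((-r + 2 * r * M / 2 ^ p ≤ x j) ↔
        (-r + 2 * r * M / 2 ^ p ≤ repPt r p (Kcl r p x) j)) := by
    intro j M h1 h2
    rw [thresh_iff_Kcl r hr x j M (Finset.mem_Icc.2 ⟨h1, h2⟩), repPt_thresh r hr]
  have := (trace_eq r hr x (repPt r p (Kcl r p x)) hxy ω p le_rfl).1
  rw [cellOf, cellOf, this]

lemma volume_toSet (r : ℝ) (hr : 0 < r) (B : DBox d) :
    volume (B.toSet r) = ∏ j, ENNReal.ofReal (2 * r / 2 ^ (B.s j)) := by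
  have hset : B.toSet r = Set.pi Set.univ fun j =>
      Set.Ico (-r + 2 * r * B.k j / 2 ^ B.s j) (-r + 2 * r * (B.k j + 1) / 2 ^ B.s j) := by
    ext z
    simp [DBox.toSet, Set.mem_pi]
  rw [hset, volume_pi_pi]
  apply Finset.prod_congr rfl
  intro j _
  rw [Real.volume_Ico]
  congr 1
  have h2 : (0:ℝ) < (2:ℝ) ^ (B.s j) := by positivity
  field_simp
  ring

lemma volume_toSet_pos (r : ℝ) (hr : 0 < r) (B : DBox d) :
    0 < (volume (B.toSet r)).toReal := by
  rw [volume_toSet r hr B, ENNReal.toReal_prod]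
  apply Finset.prod_pos
  intro j _
  rw [ENNReal.toReal_ofReal (by positivity)]
  positivity

lemma volume_toSet_ne_top (r : ℝ) (hr : 0 < r) (B : DBox d) :
    volume (B.toSet r) ≠ ⊤ := by
  rw [volume_toSet r hr B]
  exact ENNReal.prod_ne_top fun j _ => ENNReal.ofReal_ne_top

lemma ratio_bounds (r : ℝ) (hr : 0 < r) (F : ℝ) (hF : 0 ≤ F)
    (f : (Fin d → ℝ) → ℝ) (hfF : ∀ x, f x ≤ F) (B : DBox d) :
    0 ≤ ((volume.withDensity fun z => ENNReal.ofReal (f z)) (B.toSet r)).toReal /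
        (volume (B.toSet r)).toReal ∧
      ((volume.withDensity fun z => ENNReal.ofReal (f z)) (B.toSet r)).toReal /
        (volume (B.toSet r)).toReal ≤ F := by
  have hvpos := volume_toSet_pos r hr B
  have hvne := volume_toSet_ne_top r hr B
  have hmeas : MeasurableSet (B.toSet r) := by
    have hset : B.toSet r = Set.pi Set.univ fun j =>
        Set.Ico (-r + 2 * r * B.k j / 2 ^ B.s j) (-r + 2 * r * (B.k j + 1) / 2 ^ B.s j) := by
      ext z
      simp [DBox.toSet, Set.mem_pi]
    rw [hset]
    exact MeasurableSet.univ_pi fun j => measurableSet_Ico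
  have hP : (volume.withDensity fun z => ENNReal.ofReal (f z)) (B.toSet r) ≤
      ENNReal.ofReal F * volume (B.toSet r) := by
    rw [withDensity_apply _ hmeas]
    calc ∫⁻ z in B.toSet r, ENNReal.ofReal (f z) ∂volume
        ≤ ∫⁻ _z in B.toSet r, ENNReal.ofReal F ∂volume := by
          apply lintegral_mono
          intro z
          exact ENNReal.ofReal_le_ofReal (hfF z)
      _ = ENNReal.ofReal F * volume (B.toSet r) := by
          rw [MeasureTheory.setLIntegral_const]
  have hPne : (volume.withDensity fun z => ENNReal.ofReal (f z)) (B.toSet r) ≠ ⊤ :=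
    ne_top_of_le_ne_top (by
      exact ENNReal.mul_ne_top ENNReal.ofReal_ne_top hvne) hP
  constructor
  · positivity
  · rw [div_le_iff₀ hvpos]
    have := ENNReal.toReal_mono (ENNReal.mul_ne_top ENNReal.ofReal_ne_top hvne) hP
    rw [ENNReal.toReal_mul, ENNReal.toReal_ofReal hF] at this
    exact this

end
end MFRDE


namespace MFRDE
section Meas

variable {d p T : ℕ}

instance msc_pi : MeasurableSingletonClass (Fin T → TC d p) := by
  constructor
  intro f
  have hfs : ({f} : Set (Fin T → TC d p)) = ⋂ t, (fun g : Fin T → TC d p => g t) ⁻¹' {f t} := by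
    ext g
    simp [funext_iff, Set.mem_iInter]
  rw [hfs]
  exact MeasurableSet.iInter fun t => measurable_pi_apply t trivial

lemma unif_compl_ge {d p T : ℕ} (hd : 0 < d) (S : Set (Fin T → TC d p)) (e : ℝ) (he : 0 ≤ e)
    (hcount : Measure.count S ≤
      ENNReal.ofReal (e * (Fintype.card (Fin T → TC d p)))) :
    1 - ENNReal.ofReal e ≤ (unif (Fin T → TC d p)) Sᶜ := by
  classical
  haveI : Nonempty (Fin d) := ⟨⟨0, hd⟩⟩
  haveI hne : Nonempty (TC d p) := ⟨fun _ _ => ⟨0, hd⟩⟩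
  set N : ℕ := Fintype.card (Fin T → TC d p) with hN
  have hN0 : (N : ℝ≥0∞) ≠ 0 := by
    simp [hN, Fintype.card_ne_zero]
  have hNtop : (N : ℝ≥0∞) ≠ ⊤ := ENNReal.natCast_ne_top N
  have hSm : MeasurableSet S := (Set.toFinite S).measurableSet
  have hunifS : (unif (Fin T → TC d p)) S ≤ ENNReal.ofReal e := by
    rw [unif, Measure.smul_apply, smul_eq_mul]
    have h1 : Measure.count S ≤ ENNReal.ofReal e * N := by
      calc Measure.count S ≤ ENNReal.ofReal (e * N) := hcount
        _ = ENNReal.ofReal e * ENNReal.ofReal (N : ℝ) := ENNReal.ofReal_mul he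
        _ = ENNReal.ofReal e * N := by rw [ENNReal.ofReal_natCast]
    calc (N : ℝ≥0∞)⁻¹ * Measure.count S
        ≤ (N : ℝ≥0∞)⁻¹ * (ENNReal.ofReal e * N) := mul_le_mul_right h1 _
      _ = ENNReal.ofReal e * ((N : ℝ≥0∞)⁻¹ * N) := by ring
      _ = ENNReal.ofReal e := by rw [ENNReal.inv_mul_cancel hN0 hNtop, mul_one]
  have hunifuniv : (unif (Fin T → TC d p)) Set.univ = 1 := by
    rw [unif, Measure.smul_apply, smul_eq_mul]
    have : Measure.count (Set.univ : Set (Fin T → TC d p)) = (N : ℝ≥0∞) := by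
      have h2 : (Set.univ : Set (Fin T → TC d p)) = ((Finset.univ : Finset (Fin T → TC d p)) :
          Set (Fin T → TC d p)) := by simp
      rw [h2, Measure.count_apply_finset, Finset.card_univ]
    rw [this, ENNReal.inv_mul_cancel hN0 hNtop]
  have hq := measure_add_measure_compl (μ := unif (Fin T → TC d p)) hSm
  rw [hunifuniv] at hq
  rw [tsub_le_iff_right]
  calc (1 : ℝ≥0∞) = (unif (Fin T → TC d p)) S + (unif (Fin T → TC d p)) Sᶜ := hq.symm
    _ ≤ ENNReal.ofReal e + (unif (Fin T → TC d p)) Sᶜ := add_le_add_left hunifS _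
    _ = (unif (Fin T → TC d p)) Sᶜ + ENNReal.ofReal e := add_comm _ _

lemma unif_forall_ge {d p T : ℕ} (hd : 0 < d) (r : ℝ)
    (Q : (Fin d → ℝ) → (Fin T → TC d p) → ℝ) (ε e : ℝ) (he : 0 ≤ e)
    (hcount : ((Finset.univ.filter fun ωs : Fin T → TC d p =>
        ¬ ∀ x ∈ Box d r, |Q x ωs| ≤ ε).card : ℝ) ≤ e * (Fintype.card (Fin T → TC d p))) :
    1 - ENNReal.ofReal e ≤ (unif (Fin T → TC d p)) {ωs | ∀ x ∈ Box d r, |Q x ωs| ≤ ε} := by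
  classical
  have hcnt2 : Measure.count {ωs : Fin T → TC d p | ¬ ∀ x ∈ Box d r, |Q x ωs| ≤ ε} ≤
      ENNReal.ofReal (e * (Fintype.card (Fin T → TC d p))) := by
    have hSeq : {ωs : Fin T → TC d p | ¬ ∀ x ∈ Box d r, |Q x ωs| ≤ ε} =
        ((Finset.univ.filter fun ωs : Fin T → TC d p => ¬ ∀ x ∈ Box d r, |Q x ωs| ≤ ε) :
          Finset (Fin T → TC d p)) := by
      ext ωs
      simp
    rw [hSeq, Measure.count_apply_finset]
    calc ((Finset.univ.filter fun ωs : Fin T → TC d p =>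
          ¬ ∀ x ∈ Box d r, |Q x ωs| ≤ ε).card : ℝ≥0∞)
        = ENNReal.ofReal ((Finset.univ.filter fun ωs : Fin T → TC d p =>
            ¬ ∀ x ∈ Box d r, |Q x ωs| ≤ ε).card : ℝ) := by rw [ENNReal.ofReal_natCast]
      _ ≤ ENNReal.ofReal (e * (Fintype.card (Fin T → TC d p))) :=
          ENNReal.ofReal_le_ofReal hcount
  have h2 := unif_compl_ge hd {ωs : Fin T → TC d p | ¬ ∀ x ∈ Box d r, |Q x ωs| ≤ ε} e he hcnt2
  have hset : {ωs : Fin T → TC d p | ¬ ∀ x ∈ Box d r, |Q x ωs| ≤ ε}ᶜ =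
      {ωs | ∀ x ∈ Box d r, |Q x ωs| ≤ ε} := by
    ext ωs
    simp [Set.mem_compl_iff, not_not]
  rwa [hset] at h2

end Meas
end MFRDE


open MeasureTheory ProbabilityTheory Real Filter Finset MFRDE
open scoped ENNReal Classical

/-- **Sampling error bound** (Lemma 2): for `T` i.i.d. depth-`p` random tree partitions
of `B_r` (driven by the uniformly random `ωs : Fin T → TC d p`), with probability at
least `1 - e^{-τ}`, uniformly over `x ∈ B_r`, the average `(1/T)∑_t P(A_p^t(x))/μ(A_p^t(x))`
deviates from its `P_Z`-expectation by at most
`√(2c₁²(τ + pd log 2)/T) + 2(τ + pd log 2)/(3T)`, where `c₁ = ‖f‖_∞ + c_L (2r√d)^α`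
(with `F` a bound for `‖f‖_∞`). -/
theorem statement5
    (d p T : ℕ) (hd : 0 < d) (hT : 0 < T) (r α c_L F τ : ℝ)
    (hr : 0 < r) (hα0 : 0 < α) (hα1 : α ≤ 1) (hcL : 0 < c_L) (hF : 0 ≤ F) (hτ : 0 < τ)
    (f : (Fin d → ℝ) → ℝ)
    (hf0 : ∀ x, 0 ≤ f x) (hfF : ∀ x, f x ≤ F) (hfsupp : ∀ x, x ∉ Box d r → f x = 0)
    (hfH : Holder f c_L α)
    (hfP : IsProbabilityMeasure (volume.withDensity fun x => ENNReal.ofReal (f x))) :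
    1 - ENNReal.ofReal (Real.exp (-τ)) ≤
      (unif (Fin T → TC d p))
        {ωs | ∀ x ∈ Box d r,
          |(T : ℝ)⁻¹ * ∑ t,
              ((volume.withDensity fun z => ENNReal.ofReal (f z))
                  ((cellOf r (ωs t) x).toSet r)).toReal /
                (volume ((cellOf r (ωs t) x).toSet r)).toReal -
            (∑ ω₀ : TC d p,
                ((volume.withDensity fun z => ENNReal.ofReal (f z))
                    ((cellOf r ω₀ x).toSet r)).toReal /
                  (volume ((cellOf r ω₀ x).toSet r)).toReal) /
              (Fintype.card (TC d p))| ≤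
          Real.sqrt (2 * (F + c_L * (2 * r * Real.sqrt d) ^ α) ^ 2 *
              (τ + p * d * Real.log 2) / T) +
            2 * (τ + p * d * Real.log 2) / (3 * T)} := by
  classical
  haveI : Nonempty (Fin d) := ⟨⟨0, hd⟩⟩
  haveI hne : Nonempty (TC d p) := ⟨fun _ _ => ⟨0, hd⟩⟩
  apply unif_forall_ge hd r _ _ _ (Real.exp_nonneg (-τ))
  set c₁ : ℝ := F + c_L * (2 * r * Real.sqrt d) ^ α with hc₁
  set u : ℝ := τ + p * d * Real.log 2 with huu
  set ε : ℝ := Real.sqrt (2 * c₁ ^ 2 * u / T) + 2 * u / (3 * T) with hεd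
  have hlog2 : (0 : ℝ) < Real.log 2 := Real.log_pos (by norm_num)
  have hu0 : 0 < u := by
    rw [huu]
    have : (0 : ℝ) ≤ (p : ℝ) * d * Real.log 2 := by positivity
    linarith
  have hTpos : (0 : ℝ) < T := by exact_mod_cast hT
  have hc₁pos : 0 < c₁ := by
    rw [hc₁]
    have hb : (0 : ℝ) < 2 * r * Real.sqrt d := by
      have : (0 : ℝ) < Real.sqrt d := Real.sqrt_pos.2 (by exact_mod_cast hd)
      positivity
    have := Real.rpow_pos_of_pos hb α
    nlinarith
  have hε0 : 0 ≤ ε := by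
    rw [hεd]
    have : 0 ≤ 2 * u / (3 * T) := by positivity
    have := Real.sqrt_nonneg (2 * c₁ ^ 2 * u / T)
    linarith
  rcases Nat.eq_zero_or_pos p with hp0 | hp1
  · -- p = 0 : the deviation is identically zero
    subst hp0
    have hempty : (Finset.univ.filter fun ωs : Fin T → TC d 0 =>
        ¬ ∀ x ∈ Box d r, |(T : ℝ)⁻¹ * ∑ t,
            ((volume.withDensity fun z => ENNReal.ofReal (f z))
                ((cellOf r (ωs t) x).toSet r)).toReal /
              (volume ((cellOf r (ωs t) x).toSet r)).toReal -
          (∑ ω₀ : TC d 0,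
              ((volume.withDensity fun z => ENNReal.ofReal (f z))
                  ((cellOf r ω₀ x).toSet r)).toReal /
                (volume ((cellOf r ω₀ x).toSet r)).toReal) /
            (Fintype.card (TC d 0))| ≤ ε) = ∅ := by
      rw [Finset.filter_eq_empty_iff]
      intro ωs _
      rw [not_not]
      intro x _
      have hroot : ∀ (ω : TC d 0), cellOf r ω x = DBox.root d := fun _ => rfl
      simp only [hroot]
      set C : ℝ := ((volume.withDensity fun z => ENNReal.ofReal (f z))
          ((DBox.root d).toSet r)).toReal / (volume ((DBox.root d).toSet r)).toReal with hC
      have hκpos : (0 : ℝ) < Fintype.card (TC d 0) := by exact_mod_cast Fintype.card_pos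
      have h0 : (T : ℝ)⁻¹ * ∑ _t : Fin T, C -
          (∑ _ω₀ : TC d 0, C) / (Fintype.card (TC d 0)) = 0 := by
        rw [Finset.sum_const, Finset.sum_const, Finset.card_univ, Finset.card_univ,
          Fintype.card_fin, nsmul_eq_mul, nsmul_eq_mul]
        field_simp
        ring
      rw [h0, abs_zero]
      exact hε0
    rw [hempty]
    simp only [Finset.card_empty, Nat.cast_zero]
    positivity
  · -- p ≥ 1 : union bound + Bernstein/Hoeffding
    haveI : Nonempty (Fin (2 ^ p)) := ⟨⟨0, Nat.two_pow_pos p⟩⟩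
    set GK : (Fin d → Fin (2 ^ p)) → TC d p → ℝ := fun K ω =>
      ((volume.withDensity fun z => ENNReal.ofReal (f z))
          ((cellOf r ω (repPt r p fun j => (K j : ℕ))).toSet r)).toReal /
        (volume ((cellOf r ω (repPt r p fun j => (K j : ℕ))).toSet r)).toReal with hGK
    have hsub : (Finset.univ.filter fun ωs : Fin T → TC d p =>
        ¬ ∀ x ∈ Box d r, |(T : ℝ)⁻¹ * ∑ t,
            ((volume.withDensity fun z => ENNReal.ofReal (f z))
                ((cellOf r (ωs t) x).toSet r)).toReal /
              (volume ((cellOf r (ωs t) x).toSet r)).toReal -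
          (∑ ω₀ : TC d p,
              ((volume.withDensity fun z => ENNReal.ofReal (f z))
                  ((cellOf r ω₀ x).toSet r)).toReal /
                (volume ((cellOf r ω₀ x).toSet r)).toReal) /
            (Fintype.card (TC d p))| ≤ ε) ⊆
        (Finset.univ.filter fun ωs : Fin T → TC d p => ¬ ∀ K : Fin d → Fin (2 ^ p),
          |(T : ℝ)⁻¹ * ∑ t, GK K (ωs t) - (∑ ω, GK K ω) / (Fintype.card (TC d p))| ≤ ε) := by
      intro ωs hωs
      rw [Finset.mem_filter] at hωs ⊢
      refine ⟨Finset.mem_univ _, ?_⟩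
      intro hall
      apply hωs.2
      intro x _
      have hcell : ∀ ω : TC d p, cellOf r ω x =
          cellOf r ω (repPt r p fun j =>
            (((fun j => (⟨Kcl r p x j, Kcl_lt r x j⟩ : Fin (2 ^ p))) j : ℕ))) := by
        intro ω
        exact cellOf_class_eq r hr x ω
      have := hall fun j => (⟨Kcl r p x j, Kcl_lt r x j⟩ : Fin (2 ^ p))
      rw [hGK] at this
      simp only [] at this
      simp only [hcell]
      exact this
    have hGb := fun (K : Fin d → Fin (2 ^ p)) (ω : TC d p) =>
      ratio_bounds r hr F hF f hfF (cellOf r ω (repPt r p fun j => (K j : ℕ)))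
    have hFc₁ : F ≤ c₁ := by
      rw [hc₁]
      have hb : (0 : ℝ) < 2 * r * Real.sqrt d := by
        have : (0 : ℝ) < Real.sqrt d := Real.sqrt_pos.2 (by exact_mod_cast hd)
        positivity
      have := Real.rpow_pos_of_pos hb α
      nlinarith
    have hcher := union_chernoff (I := Fin d → Fin (2 ^ p)) T hT GK c₁ ε hc₁pos
      (fun K ω => (hGb K ω).1) (fun K ω => le_trans (hGb K ω).2 hFc₁) hε0
    have hcard : ((Finset.univ.filter fun ωs : Fin T → TC d p =>
        ¬ ∀ x ∈ Box d r, |(T : ℝ)⁻¹ * ∑ t,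
            ((volume.withDensity fun z => ENNReal.ofReal (f z))
                ((cellOf r (ωs t) x).toSet r)).toReal /
              (volume ((cellOf r (ωs t) x).toSet r)).toReal -
          (∑ ω₀ : TC d p,
              ((volume.withDensity fun z => ENNReal.ofReal (f z))
                  ((cellOf r ω₀ x).toSet r)).toReal /
                (volume ((cellOf r ω₀ x).toSet r)).toReal) /
            (Fintype.card (TC d p))| ≤ ε).card : ℝ) ≤
        (Fintype.card (Fin d → Fin (2 ^ p))) *
          (2 * Real.exp (-(2 * T * ε ^ 2 / c₁ ^ 2)) * (Fintype.card (TC d p)) ^ T) := by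
      refine le_trans ?_ hcher
      exact_mod_cast Finset.card_le_card hsub
    -- numeric estimate
    have hεsq : 2 * c₁ ^ 2 * u / T ≤ ε ^ 2 := by
      have ha : 0 ≤ 2 * c₁ ^ 2 * u / T := by positivity
      have h1 : Real.sqrt (2 * c₁ ^ 2 * u / T) ≤ ε := by
        rw [hεd]
        have : 0 ≤ 2 * u / (3 * T) := by positivity
        linarith
      calc 2 * c₁ ^ 2 * u / T = Real.sqrt (2 * c₁ ^ 2 * u / T) ^ 2 := (Real.sq_sqrt ha).symm
        _ ≤ ε ^ 2 := pow_le_pow_left₀ (Real.sqrt_nonneg _) h1 2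
    have hrate : 4 * u ≤ 2 * T * ε ^ 2 / c₁ ^ 2 := by
      have h2 : 2 * T * (2 * c₁ ^ 2 * u / T) / c₁ ^ 2 = 4 * u := by
        field_simp
        ring
      rw [← h2]
      gcongr
    have hexp2 : Real.exp (-(2 * T * ε ^ 2 / c₁ ^ 2)) ≤ Real.exp (-(4 * u)) :=
      Real.exp_le_exp.2 (by linarith)
    have hkey : ((2 : ℝ) ^ p) ^ d * (2 * Real.exp (-(4 * u))) ≤ Real.exp (-τ) :=
      numeric_key p d hp1 hd τ u hτ huu
    have hcardI : (Fintype.card (Fin d → Fin (2 ^ p)) : ℝ) = ((2 : ℝ) ^ p) ^ d := by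
      rw [Fintype.card_fun, Fintype.card_fin, Fintype.card_fin]
      push_cast
      ring
    have hcardN : (Fintype.card (Fin T → TC d p) : ℝ) = (Fintype.card (TC d p) : ℝ) ^ T := by
      rw [Fintype.card_fun, Fintype.card_fin]
      push_cast
      ring
    refine le_trans hcard ?_
    rw [hcardI, hcardN]
    have hκTpos : (0 : ℝ) < (Fintype.card (TC d p) : ℝ) ^ T := by
      have : (0 : ℝ) < (Fintype.card (TC d p) : ℝ) := by exact_mod_cast Fintype.card_pos
      positivity
    calc ((2 : ℝ) ^ p) ^ d *
          (2 * Real.exp (-(2 * T * ε ^ 2 / c₁ ^ 2)) * (Fintype.card (TC d p)) ^ T)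
        ≤ ((2 : ℝ) ^ p) ^ d * (2 * Real.exp (-(4 * u)) * (Fintype.card (TC d p)) ^ T) := by
          have hpd : (0:ℝ) ≤ ((2 : ℝ) ^ p) ^ d := by positivity
          apply mul_le_mul_of_nonneg_left _ hpd
          apply mul_le_mul_of_nonneg_right _ hκTpos.le
          linarith
      _ = (((2 : ℝ) ^ p) ^ d * (2 * Real.exp (-(4 * u)))) * (Fintype.card (TC d p)) ^ T := by
          ring
      _ ≤ Real.exp (-τ) * (Fintype.card (TC d p)) ^ T :=
          mul_le_mul_of_nonneg_right hkey hκTpos.le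
end

section
/- Approximation error bound: let f be an α-Hölder probability density (constant c_L, α ∈ (0,1]) of the measure P on ℝ^d, and let A_p(x) be the cell containing x of a random tree partition of B_r := [−r,r]^d of depth p, with law P_Z. Then for every x ∈ B_r, | E_{P_Z}[ P(A_p(x))/μ(A_p(x)) ] − f(x) | ≤ c_L (2r)^α d · exp( (2^{−α} − 1) p / d ). -/
open MeasureTheory ProbabilityTheory Real Filter Finset
open scoped ENNReal Classical

open MeasureTheory ProbabilityTheory Real Filter Finset MFRDE
open scoped ENNReal Classical

namespace MFRDEProof

noncomputable section

variable {d : ℕ}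

/-- Lower endpoint of a dyadic box in coordinate `j`. -/
def lo (B : DBox d) (r : ℝ) (j : Fin d) : ℝ := -r + 2 * r * B.k j / 2 ^ B.s j

/-- Upper endpoint of a dyadic box in coordinate `j`. -/
def hi (B : DBox d) (r : ℝ) (j : Fin d) : ℝ := -r + 2 * r * (B.k j + 1) / 2 ^ B.s j

lemma toSet_eq (B : DBox d) (r : ℝ) :
    B.toSet r = Set.univ.pi fun j => Set.Ico (lo B r j) (hi B r j) := by
  ext y; simp [DBox.toSet, lo, hi, Set.mem_pi]

lemma hi_sub_lo (B : DBox d) (r : ℝ) (j : Fin d) :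
    hi B r j - lo B r j = 2 * r / 2 ^ B.s j := by
  have h2 : ((2 : ℝ)) ^ B.s j ≠ 0 := by positivity
  unfold lo hi; field_simp; ring

/-- `x` lies in the closed version of the box `B`. -/
def Good (B : DBox d) (r : ℝ) (x : Fin d → ℝ) : Prop :=
  ∀ j, lo B r j ≤ x j ∧ x j ≤ hi B r j

lemma split_s (B : DBox d) (j i : Fin d) (b : Bool) :
    (B.split j b).s i = if i = j then B.s j + 1 else B.s i := by
  simp [DBox.split, Function.update_apply]

lemma split_s_self (B : DBox d) (j : Fin d) (b : Bool) :
    (B.split j b).s j = B.s j + 1 := by simp [split_s]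

lemma split_s_ne (B : DBox d) {i j : Fin d} (h : i ≠ j) (b : Bool) :
    (B.split j b).s i = B.s i := by simp [split_s, h]

lemma lo_split_ne (B : DBox d) (r : ℝ) {i j : Fin d} (h : i ≠ j) (b : Bool) :
    lo (B.split j b) r i = lo B r i := by
  simp [lo, DBox.split, Function.update_apply, h]

lemma hi_split_ne (B : DBox d) (r : ℝ) {i j : Fin d} (h : i ≠ j) (b : Bool) :
    hi (B.split j b) r i = hi B r i := by
  simp [hi, DBox.split, Function.update_apply, h]

lemma lo_split_true (B : DBox d) (r : ℝ) (j : Fin d) :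
    lo (B.split j true) r j = B.mid r j := by
  have h2 : ((2 : ℝ)) ^ B.s j ≠ 0 := by positivity
  simp only [lo, DBox.split, DBox.mid, Function.update_self, if_true]
  push_cast
  rw [pow_succ]
  field_simp

lemma hi_split_true (B : DBox d) (r : ℝ) (j : Fin d) :
    hi (B.split j true) r j = hi B r j := by
  have h2 : ((2 : ℝ)) ^ B.s j ≠ 0 := by positivity
  simp only [hi, DBox.split, Function.update_self, if_true]
  push_cast
  rw [pow_succ]
  field_simp
  ring

lemma lo_split_false (B : DBox d) (r : ℝ) (j : Fin d) :
    lo (B.split j false) r j = lo B r j := by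
  have h2 : ((2 : ℝ)) ^ B.s j ≠ 0 := by positivity
  simp only [lo, DBox.split, Function.update_self, Bool.false_eq_true, if_false]
  push_cast
  rw [pow_succ]
  field_simp
  ring

lemma hi_split_false (B : DBox d) (r : ℝ) (j : Fin d) :
    hi (B.split j false) r j = B.mid r j := by
  have h2 : ((2 : ℝ)) ^ B.s j ≠ 0 := by positivity
  simp only [hi, DBox.split, DBox.mid, Function.update_self, Bool.false_eq_true, if_false]
  push_cast
  rw [pow_succ]
  field_simp
  ring

lemma good_split {B : DBox d} {r : ℝ} {x : Fin d → ℝ} (hG : Good B r x) (j : Fin d) :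
    Good (B.split j (if B.mid r j ≤ x j then true else false)) r x := by
  intro i
  by_cases hij : i = j
  · subst hij
    by_cases hm : B.mid r i ≤ x i
    · simp only [if_pos hm]
      exact ⟨by rw [lo_split_true]; exact hm, by rw [hi_split_true]; exact (hG i).2⟩
    · simp only [if_neg hm]
      exact ⟨by rw [lo_split_false]; exact (hG i).1,
        by rw [hi_split_false]; exact (le_of_not_ge hm)⟩
  · exact ⟨by rw [lo_split_ne _ _ hij]; exact (hG i).1,
      by rw [hi_split_ne _ _ hij]; exact (hG i).2⟩

lemma good_root {r : ℝ} {x : Fin d → ℝ} (hx : x ∈ Box d r) : Good (DBox.root d) r x := by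
  intro j
  have h := hx j
  have hlo : lo (DBox.root d) r j = -r := by simp [lo, DBox.root]
  have hhi : hi (DBox.root d) r j = r := by norm_num [hi, DBox.root]; linarith
  rw [hlo, hhi]
  exact ⟨h.1, h.2⟩

lemma good_trace {p : ℕ} {r : ℝ} {x : Fin d → ℝ} (hx : x ∈ Box d r) (ω : TC d p) :
    ∀ k, Good ((trace r ω x k).1) r x := by
  intro k
  induction k with
  | zero => exact good_root hx
  | succ k ih =>
    by_cases h : k < p
    · simp only [trace, dif_pos h]
      exact good_split ih _
    · simp only [trace, dif_neg h]
      exact ih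

/-- Deterministic analogue of `trace` driven by a fixed sequence of coordinates. -/
def dtrace (r : ℝ) (x : Fin d → ℝ) (c : ℕ → Fin d) : ℕ → DBox d × (ℕ → Bool)
  | 0 => (DBox.root d, fun _ => false)
  | k + 1 =>
    let prev := dtrace r x c k
    let j := c k
    let b : Bool := if prev.1.mid r j ≤ x j then true else false
    (prev.1.split j b, Function.update prev.2 k b)

lemma dtrace_congr {r : ℝ} {x : Fin d → ℝ} {c c' : ℕ → Fin d} :
    ∀ k, (∀ i, i < k → c i = c' i) → dtrace r x c k = dtrace r x c' k := by
  intro k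
  induction k with
  | zero => intro _; rfl
  | succ k ih =>
    intro h
    have e : dtrace r x c k = dtrace r x c' k := ih fun i hi => h i (hi.trans (Nat.lt_succ_self k))
    simp only [dtrace, e, h k (Nat.lt_succ_self k)]

lemma dtrace_s {r : ℝ} {x : Fin d → ℝ} (c : ℕ → Fin d) :
    ∀ k (j : Fin d), ((dtrace r x c k).1).s j =
      ((Finset.range k).filter fun i => c i = j).card := by
  intro k
  induction k with
  | zero => intro j; simp [dtrace, DBox.root]
  | succ k ih =>
    intro j
    simp only [dtrace]
    rw [split_s, Finset.range_add_one, Finset.filter_insert]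
    by_cases hc : c k = j
    · subst hc
      rw [if_pos rfl, if_pos rfl, Finset.card_insert_of_notMem (by simp), ih]
    · rw [if_neg (fun h => hc h.symm), if_neg hc, ih]

/-- The coordinates chosen along the path of `x` in the random tree partition. -/
def coordsOf (r : ℝ) {p : ℕ} (x : Fin d → ℝ) (ω : TC d p) : Fin p → Fin d :=
  fun k => ω k fun i => (trace r ω x k.1).2 i.1

lemma trace_eq_dtrace {r : ℝ} {x : Fin d → ℝ} {p : ℕ} (ω : TC d p) (c : ℕ → Fin d)
    (h : ∀ k (hk : k < p), (ω ⟨k, hk⟩ fun i => (dtrace r x c k).2 i.1) = c k) :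
    ∀ k, k ≤ p → trace r ω x k = dtrace r x c k := by
  intro k
  induction k with
  | zero => intro _; rfl
  | succ k ih =>
    intro hk1
    have hk : k < p := hk1
    have e := ih hk.le
    simp only [trace, dtrace, dif_pos hk, e, h k hk]

lemma trace_eq_dtrace_coords {r : ℝ} {x : Fin d → ℝ} {p : ℕ} (ω : TC d p) (g : ℕ → Fin d) :
    ∀ k, k ≤ p → trace r ω x k =
      dtrace r x (fun n => if h : n < p then coordsOf r x ω ⟨n, h⟩ else g n) k := by
  intro k
  induction k with
  | zero => intro _; rfl
  | succ k ih =>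
    intro hk1
    have hk : k < p := hk1
    have e := ih hk.le
    simp only [trace, dtrace, dif_pos hk]
    have hc2 : coordsOf r x ω ⟨k, hk⟩ = ω ⟨k, hk⟩ fun i => (trace r ω x k).2 i.1 := rfl
    rw [hc2, ← e]

lemma coords_eq_iff {r : ℝ} {x : Fin d → ℝ} {p : ℕ} (ω : TC d p) (c : ℕ → Fin d) :
    (∀ k : Fin p, coordsOf r x ω k = c k.1) ↔
      (∀ k (hk : k < p), (ω ⟨k, hk⟩ fun i => (dtrace r x c k).2 i.1) = c k) := by
  constructor
  · intro h k hk
    have hc : c = fun n => if h' : n < p then coordsOf r x ω ⟨n, h'⟩ else c n := by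
      funext n
      by_cases hn : n < p
      · rw [dif_pos hn, h ⟨n, hn⟩]
      · rw [dif_neg hn]
    have e : trace r ω x k = dtrace r x c k := by
      conv_rhs => rw [hc]
      exact trace_eq_dtrace_coords ω c k hk.le
    rw [← e]
    exact h ⟨k, hk⟩
  · intro h k
    have e : trace r ω x k.1 = dtrace r x c k.1 := trace_eq_dtrace ω c h k.1 k.2.le
    show (ω k fun i => (trace r ω x k.1).2 i.1) = c k.1
    rw [e]
    exact h k.1 k.2

/-- Counting functions with one prescribed value. -/
lemma card_fun_fix {A : Type*} [Fintype A] [DecidableEq A] {m : ℕ} (a0 : A) (v : Fin m) :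
    Fintype.card {g : A → Fin m // g a0 = v} = m ^ (Fintype.card A - 1) := by
  have e : {g : A → Fin m // g a0 = v} ≃ ({a : A // a ≠ a0} → Fin m) :=
    { toFun := fun g a => g.1 a.1
      invFun := fun h => ⟨fun a => if ha : a = a0 then v else h ⟨a, ha⟩, by simp⟩
      left_inv := fun g => by
        apply Subtype.ext
        funext a
        dsimp
        split_ifs with ha
        · rw [ha, g.2]
        · rfl
      right_inv := fun h => by
        funext a
        dsimp
        rw [dif_neg a.2] }
  rw [Fintype.card_congr e, Fintype.card_fun, Fintype.card_fin]
  congr 1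
  rw [Fintype.card_subtype_compl, Fintype.card_subtype_eq]

lemma card_fiber_pred {p : ℕ} (H : ∀ k : Fin p, Fin k.1 → Bool) (v : Fin p → Fin d) :
    (Finset.univ.filter fun ω : TC d p => ∀ k : Fin p, ω k (H k) = v k).card =
      ∏ k : Fin p, d ^ (2 ^ k.1 - 1) := by
  rw [← Fintype.card_subtype]
  have e1 : {ω : TC d p // ∀ k : Fin p, ω k (H k) = v k} ≃
      {ω : (k : Fin p) → (Fin k.1 → Bool) → Fin d // ∀ k : Fin p, ω k (H k) = v k} :=
    { toFun := fun ω => ⟨ω.1, ω.2⟩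
      invFun := fun ω => ⟨ω.1, ω.2⟩
      left_inv := fun _ => rfl
      right_inv := fun _ => rfl }
  have e : {ω : TC d p // ∀ k : Fin p, ω k (H k) = v k} ≃
      ∀ k : Fin p, {g : (Fin k.1 → Bool) → Fin d // g (H k) = v k} :=
    e1.trans (Equiv.subtypePiEquivPi (p := fun (k : Fin p) (g : (Fin k.1 → Bool) → Fin d) => g (H k) = v k))
  rw [Fintype.card_congr e, Fintype.card_pi]
  apply Finset.prod_congr rfl
  intro k _
  rw [card_fun_fix, Fintype.card_fun, Fintype.card_bool, Fintype.card_fin]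

lemma card_TC (d p : ℕ) :
    Fintype.card (TC d p) = (∏ k : Fin p, d ^ (2 ^ k.1 - 1)) * d ^ p := by
  have : Fintype.card (TC d p) =
      Fintype.card ((k : Fin p) → (Fin k.1 → Bool) → Fin d) := rfl
  rw [this, Fintype.card_pi]
  have h : ∀ k : Fin p, Fintype.card ((Fin k.1 → Bool) → Fin d) = d ^ (2 ^ k.1 - 1) * d := by
    intro k
    rw [Fintype.card_fun, Fintype.card_fun, Fintype.card_bool, Fintype.card_fin,
      Fintype.card_fin, ← pow_succ]
    congr 1
    have : 1 ≤ 2 ^ k.1 := Nat.one_le_two_pow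
    omega
  rw [Finset.prod_congr rfl fun k _ => h k, Finset.prod_mul_distrib, Finset.prod_const,
    Finset.card_univ, Fintype.card_fin]

lemma card_fiber (r : ℝ) {p : ℕ} (x : Fin d → ℝ) (hd : 0 < d) (c' : Fin p → Fin d) :
    (Finset.univ.filter fun ω : TC d p => coordsOf r x ω = c').card =
      ∏ k : Fin p, d ^ (2 ^ k.1 - 1) := by
  have j₀ : Fin d := ⟨0, hd⟩
  set c : ℕ → Fin d := fun n => if h : n < p then c' ⟨n, h⟩ else j₀ with hc
  have hiff : ∀ ω : TC d p, coordsOf r x ω = c' ↔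
      (∀ k (hk : k < p), (ω ⟨k, hk⟩ fun i => (dtrace r x c k).2 i.1) = c k) := by
    intro ω
    rw [← coords_eq_iff]
    constructor
    · intro h k
      rw [h, hc]
      simp [k.2]
    · intro h
      funext k
      have := h k
      rw [hc] at this
      simpa [k.2] using this
  have : (Finset.univ.filter fun ω : TC d p => coordsOf r x ω = c') =
      Finset.univ.filter fun ω : TC d p =>
        ∀ k : Fin p, (ω k fun i => (dtrace r x c k.1).2 i.1) = c k.1 := by
    apply Finset.filter_congr
    intro ω _
    rw [hiff ω]
    constructor
    · intro h k; exact h k.1 k.2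
    · intro h k hk; exact h ⟨k, hk⟩
  rw [this]
  exact card_fiber_pred (fun k => fun i => (dtrace r x c k.1).2 i.1) fun k => c k.1

lemma sum_coords {r : ℝ} {p : ℕ} {x : Fin d → ℝ} (hd : 0 < d)
    (F : (Fin p → Fin d) → ℝ) :
    ∑ ω : TC d p, F (coordsOf r x ω) =
      ((∏ k : Fin p, d ^ (2 ^ k.1 - 1) : ℕ) : ℝ) * ∑ c' : Fin p → Fin d, F c' := by
  rw [← Finset.sum_fiberwise Finset.univ (coordsOf r x) fun ω => F (coordsOf r x ω)]
  rw [Finset.mul_sum]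
  apply Finset.sum_congr rfl
  intro c' _
  have : ∀ ω ∈ Finset.univ.filter fun ω : TC d p => coordsOf r x ω = c',
      F (coordsOf r x ω) = F c' := by
    intro ω hω
    rw [(Finset.mem_filter.1 hω).2]
  rw [Finset.sum_congr rfl this, Finset.sum_const, card_fiber r x hd c', nsmul_eq_mul]

lemma cell_s {r : ℝ} {p : ℕ} {x : Fin d → ℝ} (hd : 0 < d) (ω : TC d p) (j : Fin d) :
    (cellOf r ω x).s j = (Finset.univ.filter fun k : Fin p => coordsOf r x ω k = j).card := by
  have j₀ : Fin d := ⟨0, hd⟩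
  have e := trace_eq_dtrace_coords (r := r) (x := x) ω (fun _ => j₀) p le_rfl
  rw [cellOf, e, dtrace_s]
  rw [Finset.card_filter, Finset.card_filter]
  rw [← Fin.sum_univ_eq_sum_range
    (fun i => if (if h : i < p then coordsOf r x ω ⟨i, h⟩ else j₀) = j then 1 else 0) p]
  apply Finset.sum_congr rfl
  intro k _
  simp [k.2]

/-- Subadditivity of `rpow` on sums, `0 < α ≤ 1`. -/
lemma rpow_add_le {a b : ℝ} (ha : 0 ≤ a) (hb : 0 ≤ b) {α : ℝ} (hα0 : 0 < α) (hα1 : α ≤ 1) :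
    (a + b) ^ α ≤ a ^ α + b ^ α := by
  have h := NNReal.rpow_add_le_add_rpow a.toNNReal b.toNNReal hα0.le hα1
  have hab : ((a.toNNReal + b.toNNReal : NNReal) : ℝ) = a + b := by
    simp [Real.coe_toNNReal _ ha, Real.coe_toNNReal _ hb]
  calc (a + b) ^ α = (((a.toNNReal + b.toNNReal : NNReal) : ℝ)) ^ α := by rw [hab]
    _ = (((a.toNNReal + b.toNNReal) ^ α : NNReal) : ℝ) := by rw [← NNReal.coe_rpow]
    _ ≤ ((a.toNNReal ^ α + b.toNNReal ^ α : NNReal) : ℝ) := by exact_mod_cast h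
    _ = a ^ α + b ^ α := by
        push_cast
        rw [Real.coe_toNNReal _ ha, Real.coe_toNNReal _ hb]

lemma sum_rpow_le {ι : Type*} (s : Finset ι) (a : ι → ℝ) (ha : ∀ i ∈ s, 0 ≤ a i)
    {α : ℝ} (hα0 : 0 < α) (hα1 : α ≤ 1) :
    (∑ i ∈ s, a i) ^ α ≤ ∑ i ∈ s, a i ^ α := by
  induction s using Finset.cons_induction with
  | empty => simp [Real.zero_rpow hα0.ne']
  | cons i s his ih =>
    rw [Finset.sum_cons, Finset.sum_cons]
    have hs : 0 ≤ ∑ i ∈ s, a i :=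
      Finset.sum_nonneg fun i hi => ha i (Finset.mem_cons_of_mem hi)
    calc (a i + ∑ i ∈ s, a i) ^ α
        ≤ a i ^ α + (∑ i ∈ s, a i) ^ α :=
          rpow_add_le (ha i (Finset.mem_cons_self i s)) hs hα0 hα1
      _ ≤ a i ^ α + ∑ i ∈ s, a i ^ α := by
          have := ih fun i hi => ha i (Finset.mem_cons_of_mem hi)
          linarith

lemma eDist_le_sum (x y : Fin d → ℝ) : eDist x y ≤ ∑ j, |x j - y j| := by
  rw [eDist]
  have h1 : ∑ j, (x j - y j) ^ 2 ≤ (∑ j, |x j - y j|) ^ 2 := by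
    calc ∑ j, (x j - y j) ^ 2 = ∑ j, |x j - y j| ^ 2 := by simp [sq_abs]
      _ ≤ (∑ j, |x j - y j|) ^ 2 :=
          Finset.sum_sq_le_sq_sum_of_nonneg fun i _ => abs_nonneg _
  calc Real.sqrt (∑ j, (x j - y j) ^ 2) ≤ Real.sqrt ((∑ j, |x j - y j|) ^ 2) :=
        Real.sqrt_le_sqrt h1
    _ = ∑ j, |x j - y j| := Real.sqrt_sq (Finset.sum_nonneg fun i _ => abs_nonneg _)

/-- The per-realization approximation error bound. -/
lemma ratio_bound {r α c_L : ℝ}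
    (hr : 0 < r) (hα0 : 0 < α) (hα1 : α ≤ 1) (hcL : 0 < c_L)
    (f : (Fin d → ℝ) → ℝ)
    (hf0 : ∀ x, 0 ≤ f x) (hfH : Holder f c_L α) (hfm : Measurable f)
    (hfP : IsProbabilityMeasure (volume.withDensity fun x => ENNReal.ofReal (f x)))
    (x : Fin d → ℝ) (B : DBox d) (hB : Good B r x) :
    |((volume.withDensity fun z => ENNReal.ofReal (f z)) (B.toSet r)).toReal /
        (volume (B.toSet r)).toReal - f x| ≤
      c_L * ∑ j, (2 * r / 2 ^ B.s j) ^ α := by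
  set A := B.toSet r with hAdef
  have hA : MeasurableSet A := by
    rw [hAdef, toSet_eq]
    exact MeasurableSet.univ_pi fun j => measurableSet_Ico
  have hside : ∀ j : Fin d, (0 : ℝ) < 2 * r / 2 ^ B.s j := fun j => by positivity
  have hvol : volume A = ∏ j, ENNReal.ofReal (2 * r / 2 ^ B.s j) := by
    rw [hAdef, toSet_eq, volume_pi_pi]
    apply Finset.prod_congr rfl
    intro j _
    rw [Real.volume_Ico, hi_sub_lo]
  have hV : (volume A).toReal = ∏ j, (2 * r / 2 ^ B.s j) := by
    rw [hvol, ENNReal.toReal_prod]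
    exact Finset.prod_congr rfl fun j _ => ENNReal.toReal_ofReal (hside j).le
  have hVpos : 0 < (volume A).toReal := by
    rw [hV]; exact Finset.prod_pos fun j _ => hside j
  have hvolfin : volume A < ⊤ := by
    rw [hvol]
    exact ENNReal.prod_lt_top fun j _ => ENNReal.ofReal_lt_top
  have hint : IntegrableOn f A := by
    refine ⟨hfm.aestronglyMeasurable.restrict, ?_⟩
    rw [hasFiniteIntegral_iff_ofReal (Eventually.of_forall fun y => hf0 y)]
    calc ∫⁻ y in A, ENNReal.ofReal (f y)
        ≤ ∫⁻ y, ENNReal.ofReal (f y) := setLIntegral_le_lintegral A _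
      _ = (volume.withDensity fun z => ENNReal.ofReal (f z)) Set.univ := by
          rw [withDensity_apply _ MeasurableSet.univ, Measure.restrict_univ]
      _ = 1 := hfP.measure_univ
      _ < ⊤ := ENNReal.one_lt_top
  have hPA : ((volume.withDensity fun z => ENNReal.ofReal (f z)) A).toReal = ∫ y in A, f y := by
    rw [withDensity_apply _ hA]
    rw [integral_eq_lintegral_of_nonneg_ae (Eventually.of_forall fun y => hf0 y)
      hfm.aestronglyMeasurable.restrict]
  set C : ℝ := c_L * ∑ j, (2 * r / 2 ^ B.s j) ^ α with hCdef
  have key : ∀ y ∈ A, |f y - f x| ≤ C := by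
    intro y hy
    have hy' : ∀ j, y j ∈ Set.Ico (lo B r j) (hi B r j) := by
      rw [hAdef, toSet_eq] at hy
      intro j
      exact hy j (Set.mem_univ j)
    have h1 : ∀ j, |x j - y j| ≤ 2 * r / 2 ^ B.s j := by
      intro j
      have hsub := hi_sub_lo B r j
      have h2 := (hy' j).1
      have h3 := (hy' j).2
      have h4 := (hB j).1
      have h5 := (hB j).2
      rw [abs_sub_le_iff]
      constructor <;> linarith
    calc |f y - f x| = |f x - f y| := abs_sub_comm _ _
      _ ≤ c_L * eDist x y ^ α := hfH x y
      _ ≤ C := by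
          rw [hCdef]
          apply mul_le_mul_of_nonneg_left _ hcL.le
          calc eDist x y ^ α ≤ (∑ j, |x j - y j|) ^ α :=
                Real.rpow_le_rpow (Real.sqrt_nonneg _) (eDist_le_sum x y) hα0.le
            _ ≤ ∑ j, |x j - y j| ^ α :=
                sum_rpow_le _ _ (fun i _ => abs_nonneg _) hα0 hα1
            _ ≤ ∑ j, (2 * r / 2 ^ B.s j) ^ α :=
                Finset.sum_le_sum fun j _ =>
                  Real.rpow_le_rpow (abs_nonneg _) (h1 j) hα0.le
  have hconstint : IntegrableOn (fun _ : Fin d → ℝ => f x) A :=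
    integrableOn_const hvolfin.ne
  have hdiff : ∫ y in A, (f y - f x) = (∫ y in A, f y) - (volume A).toReal * f x := by
    rw [integral_sub hint hconstint, setIntegral_const, smul_eq_mul]
    rfl
  have hbnd : |∫ y in A, (f y - f x)| ≤ C * (volume A).toReal := by
    have := norm_setIntegral_le_of_norm_le_const (μ := volume) (s := A)
      (f := fun y => f y - f x) hvolfin
      (fun y hy => by rw [Real.norm_eq_abs]; exact key y hy)
    rwa [Real.norm_eq_abs] at this
  rw [hPA]
  have hrw : (∫ y in A, f y) / (volume A).toReal - f x
      = (∫ y in A, (f y - f x)) / (volume A).toReal := by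
    rw [hdiff]
    field_simp
  rw [hrw, abs_div, abs_of_pos hVpos, div_le_iff₀ hVpos]
  calc |∫ y in A, (f y - f x)| ≤ C * (volume A).toReal := hbnd
    _ = C * (volume A).toReal := rfl

lemma side_rpow {r α : ℝ} (hr : 0 < r) (s : ℕ) :
    (2 * r / 2 ^ s) ^ α = (2 * r) ^ α * ((2 : ℝ) ^ (-α)) ^ s := by
  have h1 : (0 : ℝ) ≤ 2 * r := by positivity
  rw [Real.div_rpow h1 (by positivity)]
  rw [← Real.rpow_natCast (2 : ℝ) s, ← Real.rpow_natCast ((2 : ℝ) ^ (-α)) s,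
    ← Real.rpow_mul (by norm_num : (0:ℝ) ≤ 2), ← Real.rpow_mul (by norm_num : (0:ℝ) ≤ 2),
    div_eq_mul_inv, ← Real.rpow_neg (by norm_num : (0:ℝ) ≤ 2)]
  ring_nf

end

end MFRDEProof

open MFRDEProof

/-- **Approximation error bound** (Lemma 3): if `f` is an `α`-Hölder probability density
of the measure `P`, then for every `x ∈ B_r`, the expectation over the depth-`p` random
tree partition (driven by a uniformly distributed `ω₀ : TC d p`) of `P(A_p(x))/μ(A_p(x))`
deviates from `f(x)` by at most `c_L (2r)^α d exp((2^{-α}-1) p/d)`. -/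
theorem statement6
    (d p : ℕ) (hd : 0 < d) (r α c_L : ℝ)
    (hr : 0 < r) (hα0 : 0 < α) (hα1 : α ≤ 1) (hcL : 0 < c_L)
    (f : (Fin d → ℝ) → ℝ)
    (hf0 : ∀ x, 0 ≤ f x) (hfH : Holder f c_L α) (hfm : Measurable f)
    (hfP : IsProbabilityMeasure (volume.withDensity fun x => ENNReal.ofReal (f x))) :
    ∀ x ∈ Box d r,
      |(∑ ω₀ : TC d p,
            ((volume.withDensity fun z => ENNReal.ofReal (f z))
                ((cellOf r ω₀ x).toSet r)).toReal /
              (volume ((cellOf r ω₀ x).toSet r)).toReal) /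
          (Fintype.card (TC d p)) - f x| ≤
        c_L * (2 * r) ^ α * d * Real.exp ((2 ^ (-α) - 1) * p / d) := by
  intro x hx
  set q : ℝ := 2 ^ (-α) with hqdef
  have hq0 : 0 < q := Real.rpow_pos_of_pos (by norm_num) _
  have hq1 : q ≤ 1 := Real.rpow_le_one_of_one_le_of_nonpos (by norm_num) (by linarith)
  set K : ℕ := ∏ k : Fin p, d ^ (2 ^ k.1 - 1) with hKdef
  have hKpos : 0 < K := Finset.prod_pos fun k _ => pow_pos hd _
  have hN : ((Fintype.card (TC d p) : ℝ)) = (K : ℝ) * (d : ℝ) ^ p := by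
    rw [card_TC, hKdef]; push_cast; ring
  have hdR : (0 : ℝ) < d := by exact_mod_cast hd
  have hNpos : (0 : ℝ) < (Fintype.card (TC d p) : ℝ) := by
    rw [hN]
    exact mul_pos (by exact_mod_cast hKpos) (pow_pos hdR p)
  -- per-realization bound
  have hper : ∀ ω : TC d p,
      |((volume.withDensity fun z => ENNReal.ofReal (f z))
          ((cellOf r ω x).toSet r)).toReal /
        (volume ((cellOf r ω x).toSet r)).toReal - f x| ≤
      c_L * (2 * r) ^ α * ∑ j, q ^ ((cellOf r ω x).s j) := by
    intro ω
    have hG : Good (cellOf r ω x) r x := good_trace hx ω p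
    calc |((volume.withDensity fun z => ENNReal.ofReal (f z))
          ((cellOf r ω x).toSet r)).toReal /
          (volume ((cellOf r ω x).toSet r)).toReal - f x|
        ≤ c_L * ∑ j, (2 * r / 2 ^ (cellOf r ω x).s j) ^ α :=
          ratio_bound hr hα0 hα1 hcL f hf0 hfH hfm hfP x (cellOf r ω x) hG
      _ = c_L * (2 * r) ^ α * ∑ j, q ^ ((cellOf r ω x).s j) := by
          rw [Finset.sum_congr rfl fun j _ => side_rpow hr ((cellOf r ω x).s j)]
          rw [← Finset.mul_sum, ← mul_assoc]
  -- the per-coordinate expectation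
  have hsumj : ∀ j : Fin d, ∑ ω : TC d p, q ^ ((cellOf r ω x).s j) =
      (K : ℝ) * ((d : ℝ) - 1 + q) ^ p := by
    intro j
    have hstep : ∑ ω : TC d p, q ^ ((cellOf r ω x).s j) =
        (K : ℝ) * ∑ c' : Fin p → Fin d, q ^ (Finset.univ.filter fun k => c' k = j).card := by
      calc ∑ ω : TC d p, q ^ ((cellOf r ω x).s j)
          = ∑ ω : TC d p, q ^ (Finset.univ.filter fun k : Fin p => coordsOf r x ω k = j).card :=
            Finset.sum_congr rfl fun ω _ => by rw [cell_s hd]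
        _ = (K : ℝ) * ∑ c' : Fin p → Fin d, q ^ (Finset.univ.filter fun k => c' k = j).card :=
            sum_coords hd fun c' => q ^ (Finset.univ.filter fun k => c' k = j).card
    rw [hstep]
    congr 1
    have h2 : ∀ c' : Fin p → Fin d,
        q ^ (Finset.univ.filter fun k => c' k = j).card =
          ∏ k : Fin p, if c' k = j then q else 1 := by
      intro c'
      rw [Finset.prod_ite, Finset.prod_const, Finset.prod_const, one_pow, mul_one]
    rw [Finset.sum_congr rfl fun c' _ => h2 c',
      ← Fintype.sum_pow (fun v : Fin d => if v = j then q else 1) p]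
    congr 1
    have h4 : ∀ v : Fin d, (if v = j then q else 1) = (if v = j then q - 1 else 0) + 1 := by
      intro v; split_ifs <;> ring
    rw [Finset.sum_congr rfl fun v _ => h4 v, Finset.sum_add_distrib,
      Finset.sum_ite_eq' Finset.univ j fun _ => q - 1, if_pos (Finset.mem_univ j),
      Finset.sum_const, Finset.card_univ, Fintype.card_fin, nsmul_eq_mul, mul_one]
    ring
  -- the exponential bound
  have hd1 : (1 : ℝ) ≤ d := by exact_mod_cast hd
  have hb0 : (0 : ℝ) ≤ ((d : ℝ) - 1 + q) / d := by
    apply div_nonneg _ hdR.le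
    linarith
  have hbeq : ((d : ℝ) - 1 + q) / d = 1 + (q - 1) / d := by
    field_simp
    ring
  have hexp1 : 1 + (q - 1) / d ≤ Real.exp ((q - 1) / d) := by
    have := Real.add_one_le_exp ((q - 1) / d)
    linarith
  have hpow : (((d : ℝ) - 1 + q) / d) ^ p ≤ Real.exp ((q - 1) * p / d) := by
    calc (((d : ℝ) - 1 + q) / d) ^ p ≤ (Real.exp ((q - 1) / d)) ^ p := by
          apply pow_le_pow_left₀ hb0
          rw [hbeq]
          exact hexp1
      _ = Real.exp ((q - 1) * p / d) := by
          rw [← Real.exp_nat_mul]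
          congr 1
          ring
  -- assembling
  have hsplit : (∑ ω₀ : TC d p,
        ((volume.withDensity fun z => ENNReal.ofReal (f z))
            ((cellOf r ω₀ x).toSet r)).toReal /
          (volume ((cellOf r ω₀ x).toSet r)).toReal) /
        (Fintype.card (TC d p) : ℝ) - f x =
      (∑ ω₀ : TC d p,
        (((volume.withDensity fun z => ENNReal.ofReal (f z))
            ((cellOf r ω₀ x).toSet r)).toReal /
          (volume ((cellOf r ω₀ x).toSet r)).toReal - f x)) /
        (Fintype.card (TC d p) : ℝ) := by
    rw [Finset.sum_sub_distrib, sub_div, Finset.sum_const, Finset.card_univ, nsmul_eq_mul,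
      mul_div_cancel_left₀ _ (ne_of_gt hNpos)]
  rw [hsplit]
  calc |(∑ ω₀ : TC d p,
        (((volume.withDensity fun z => ENNReal.ofReal (f z))
            ((cellOf r ω₀ x).toSet r)).toReal /
          (volume ((cellOf r ω₀ x).toSet r)).toReal - f x)) /
        (Fintype.card (TC d p) : ℝ)|
      = |∑ ω₀ : TC d p,
        (((volume.withDensity fun z => ENNReal.ofReal (f z))
            ((cellOf r ω₀ x).toSet r)).toReal /
          (volume ((cellOf r ω₀ x).toSet r)).toReal - f x)| /
        (Fintype.card (TC d p) : ℝ) := by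
        rw [abs_div, abs_of_pos hNpos]
    _ ≤ (∑ ω₀ : TC d p,
        |((volume.withDensity fun z => ENNReal.ofReal (f z))
            ((cellOf r ω₀ x).toSet r)).toReal /
          (volume ((cellOf r ω₀ x).toSet r)).toReal - f x|) /
        (Fintype.card (TC d p) : ℝ) := by
        gcongr
        exact Finset.abs_sum_le_sum_abs _ _
    _ ≤ (∑ ω₀ : TC d p, c_L * (2 * r) ^ α * ∑ j, q ^ ((cellOf r ω₀ x).s j)) /
        (Fintype.card (TC d p) : ℝ) := by
        gcongr with ω₀ _
        exact hper ω₀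
    _ = (c_L * (2 * r) ^ α * ∑ j : Fin d, ∑ ω₀ : TC d p, q ^ ((cellOf r ω₀ x).s j)) /
        (Fintype.card (TC d p) : ℝ) := by
        rw [← Finset.mul_sum, Finset.sum_comm]
    _ = (c_L * (2 * r) ^ α * ((d : ℝ) * ((K : ℝ) * ((d : ℝ) - 1 + q) ^ p))) /
        (Fintype.card (TC d p) : ℝ) := by
        rw [Finset.sum_congr rfl fun j _ => hsumj j, Finset.sum_const, Finset.card_univ,
          Fintype.card_fin, nsmul_eq_mul]
    _ = c_L * (2 * r) ^ α * (d : ℝ) * ((((d : ℝ) - 1 + q)) / d) ^ p := by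
        rw [hN, div_pow]
        have hKne : (K : ℝ) ≠ 0 := by positivity
        have hdne : ((d : ℝ)) ^ p ≠ 0 := by positivity
        field_simp
    _ ≤ c_L * (2 * r) ^ α * (d : ℝ) * Real.exp ((q - 1) * p / d) := by
        apply mul_le_mul_of_nonneg_left hpow
        have h2r : (0 : ℝ) ≤ (2 * r) ^ α := Real.rpow_nonneg (by linarith) _
        positivity
    _ = c_L * (2 * r) ^ α * d * Real.exp ((2 ^ (-α) - 1) * ↑p / ↑d) := by rw [hqdef]
end

section
/- Moment bound on the cell diameter: let A_p(x) be the cell containing x ∈ B_r of a random tree partition of B_r := [−r,r]^d of depth p, with law P_Z, and let diam denote Euclidean diameter. Then for every 0 < β ≤ 2, E_{P_Z}[ diam(A_p(x))^β ] ≤ (2r)^β d · exp( (2^{−β} − 1) p / d ). Equivalently, in terms of the split counts: if S_{p,1},…,S_{p,d} are the numbers of times each coordinate is chosen among the p independent uniform coordinate choices along the path to the cell containing x (so (S_{p,1},…,S_{p,d}) is multinomial with p trials and probabilities 1/d each, and the j-th side length of A_p(x) equals 2r·2^{−S_{p,j}}), then E[ ( ∑_{j=1}^d (2r)² 4^{−S_{p,j}}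 )^{β/2} ] ≤ (2r)^β d · exp( (2^{−β} − 1) p / d ). -/
open Finset Real

private lemma rpow_add_le' {x y q : ℝ} (hx : 0 ≤ x) (hy : 0 ≤ y) (hq0 : 0 ≤ q) (hq1 : q ≤ 1) :
    (x + y) ^ q ≤ x ^ q + y ^ q := by
  have h := NNReal.rpow_add_le_add_rpow x.toNNReal y.toNNReal hq0 hq1
  have h' : (((x.toNNReal + y.toNNReal) ^ q : NNReal) : ℝ) ≤
      ((x.toNNReal ^ q + y.toNNReal ^ q : NNReal) : ℝ) := by exact_mod_cast h
  rw [NNReal.coe_rpow, NNReal.coe_add, NNReal.coe_add, NNReal.coe_rpow, NNReal.coe_rpow,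
    Real.coe_toNNReal x hx, Real.coe_toNNReal y hy] at h'
  exact h'

private lemma rpow_sum_le {ι : Type*} (s : Finset ι) (f : ι → ℝ) (hf : ∀ i ∈ s, 0 ≤ f i)
    {q : ℝ} (hq0 : 0 < q) (hq1 : q ≤ 1) :
    (∑ i ∈ s, f i) ^ q ≤ ∑ i ∈ s, f i ^ q := by
  induction s using Finset.cons_induction with
  | empty => simp [Real.zero_rpow hq0.ne']
  | cons a s ha ih =>
    rw [Finset.sum_cons, Finset.sum_cons]
    have h1 : 0 ≤ f a := hf a (Finset.mem_cons_self a s)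
    have h2 : 0 ≤ ∑ i ∈ s, f i :=
      Finset.sum_nonneg fun i hi => hf i (Finset.mem_cons_of_mem hi)
    calc (f a + ∑ i ∈ s, f i) ^ q ≤ f a ^ q + (∑ i ∈ s, f i) ^ q :=
          rpow_add_le' h1 h2 hq0.le hq1
      _ ≤ f a ^ q + ∑ i ∈ s, f i ^ q := by
          exact add_le_add_right (ih fun i hi => hf i (Finset.mem_cons_of_mem hi)) _

private lemma term_eq (r β : ℝ) (hr : 0 < r) (S : ℕ) :
    ((2 * r) ^ 2 * (4 : ℝ) ^ (-(S : ℝ))) ^ (β / 2)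
      = (2 * r) ^ β * ((2 : ℝ) ^ (-β)) ^ S := by
  have h2r : (0 : ℝ) ≤ 2 * r := by linarith
  have h4 : (0 : ℝ) ≤ (4 : ℝ) ^ (-(S : ℝ)) := (Real.rpow_pos_of_pos (by norm_num) _).le
  rw [Real.mul_rpow (by positivity) h4]
  congr 1
  · rw [← Real.rpow_natCast (2 * r) 2, ← Real.rpow_mul h2r]
    norm_num
    congr 1
    ring
  · have : (4 : ℝ) = (2 : ℝ) ^ (2 : ℝ) := by
      rw [show (2:ℝ) = ((2:ℕ):ℝ) by norm_num, Real.rpow_natCast]; norm_num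
    rw [this, ← Real.rpow_natCast ((2:ℝ) ^ (-β)) S, ← Real.rpow_mul (by norm_num : (0:ℝ) ≤ 2),
      ← Real.rpow_mul (by norm_num : (0:ℝ) ≤ 2), ← Real.rpow_mul (by norm_num : (0:ℝ) ≤ 2)]
    ring_nf

private lemma sum_pow_card (d p : ℕ) (t : ℝ) (j : Fin d) :
    ∑ c : Fin p → Fin d, t ^ (Finset.univ.filter fun k => c k = j).card
      = (t + ((d : ℝ) - 1)) ^ p := by
  have hterm : ∀ c : Fin p → Fin d,
      t ^ (Finset.univ.filter fun k => c k = j).card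
        = ∏ k : Fin p, (if c k = j then t else 1) := by
    intro c
    rw [Finset.prod_ite, Finset.prod_const, Finset.prod_const_one, mul_one]
  rw [Finset.sum_congr rfl fun c _ => hterm c]
  rw [← Fintype.piFinset_univ,
    ← Finset.prod_univ_sum (fun _ : Fin p => (Finset.univ : Finset (Fin d)))
      (fun _ y => if y = j then t else 1)]
  have hinner : ∀ k : Fin p, ∑ j' : Fin d, (if j' = j then t else 1) = t + ((d : ℝ) - 1) := by
    intro k
    have : ∀ j' : Fin d, (if j' = j then t else 1) = (if j' = j then t - 1 else 0) + 1 := by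
      intro j'; split <;> ring
    rw [Finset.sum_congr rfl fun j' _ => this j', Finset.sum_add_distrib,
      Finset.sum_ite_eq' Finset.univ j (fun _ => t - 1), Finset.sum_const,
      Finset.card_univ, Fintype.card_fin]
    simp; ring
  rw [Finset.prod_congr rfl fun k _ => hinner k, Finset.prod_const, Finset.card_univ,
    Fintype.card_fin]

/-- **Moment bound on the cell diameter** (Lemma 9), in terms of the split counts: the
coordinate choices along the path to the cell containing `x` are `p` i.i.d. uniform
draws `c : Fin p → Fin d`; with `S_j(c)` the number of times coordinate `j` is chosen,
the `j`-th squared side length of the cell is `(2r)² 4^{-S_j}`, and the expectation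
(i.e. the average over all `d^p` equally likely choice sequences) of
`(∑_j (2r)² 4^{-S_j})^{β/2}` is at most `(2r)^β d exp((2^{-β}-1) p/d)`. -/
theorem statement13
    (d p : ℕ) (hd : 0 < d) (r β : ℝ) (hr : 0 < r) (hβ0 : 0 < β) (hβ2 : β ≤ 2) :
    (∑ c : Fin p → Fin d,
        (∑ j : Fin d, (2 * r) ^ 2 *
            (4 : ℝ) ^ (-((Finset.univ.filter fun k => c k = j).card : ℝ))) ^ (β / 2)) /
      (Fintype.card (Fin p → Fin d)) ≤
    (2 * r) ^ β * d * Real.exp ((2 ^ (-β) - 1) * p / d) := by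
  set t : ℝ := (2 : ℝ) ^ (-β) with ht
  have ht0 : 0 < t := Real.rpow_pos_of_pos (by norm_num) _
  have hd1 : (1 : ℝ) ≤ d := by exact_mod_cast hd
  have h2r : (0 : ℝ) ≤ 2 * r := by linarith
  have h2rβ : (0 : ℝ) ≤ (2 * r) ^ β := Real.rpow_nonneg h2r _
  -- pointwise bound and rewriting
  have hstep : ∀ c : Fin p → Fin d,
      (∑ j : Fin d, (2 * r) ^ 2 *
          (4 : ℝ) ^ (-((Finset.univ.filter fun k => c k = j).card : ℝ))) ^ (β / 2)
        ≤ ∑ j : Fin d, (2 * r) ^ β * t ^ (Finset.univ.filter fun k => c k = j).card := by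
    intro c
    have h1 := rpow_sum_le Finset.univ
      (fun j : Fin d => (2 * r) ^ 2 * (4 : ℝ) ^ (-((Finset.univ.filter fun k => c k = j).card : ℝ)))
      (fun j _ => by positivity) (by linarith : (0:ℝ) < β / 2) (by linarith)
    refine h1.trans_eq (Finset.sum_congr rfl fun j _ => ?_)
    exact term_eq r β hr _
  have hsum : (∑ c : Fin p → Fin d,
      (∑ j : Fin d, (2 * r) ^ 2 *
          (4 : ℝ) ^ (-((Finset.univ.filter fun k => c k = j).card : ℝ))) ^ (β / 2))
      ≤ (2 * r) ^ β * d * (t + ((d : ℝ) - 1)) ^ p := by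
    calc (∑ c : Fin p → Fin d, _) ≤ ∑ c : Fin p → Fin d, ∑ j : Fin d,
          (2 * r) ^ β * t ^ (Finset.univ.filter fun k => c k = j).card :=
          Finset.sum_le_sum fun c _ => hstep c
      _ = (2 * r) ^ β * ∑ j : Fin d, ∑ c : Fin p → Fin d,
            t ^ (Finset.univ.filter fun k => c k = j).card := by
          rw [Finset.sum_comm, Finset.mul_sum]
          exact Finset.sum_congr rfl fun j _ => by rw [Finset.mul_sum]
      _ = (2 * r) ^ β * ∑ j : Fin d, (t + ((d : ℝ) - 1)) ^ p := by
          rw [Finset.sum_congr rfl fun j _ => sum_pow_card d p t j]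
      _ = (2 * r) ^ β * d * (t + ((d : ℝ) - 1)) ^ p := by
          rw [Finset.sum_const, Finset.card_univ, Fintype.card_fin]; ring
  have hcard : ((Fintype.card (Fin p → Fin d) : ℝ)) = (d : ℝ) ^ p := by
    simp [Fintype.card_fun]
  have hdp : (0 : ℝ) < (d : ℝ) ^ p := by positivity
  rw [hcard, div_le_iff₀ hdp]
  refine hsum.trans ?_
  have hbase : t + ((d : ℝ) - 1) ≤ Real.exp ((t - 1) / d) * d := by
    have h := Real.add_one_le_exp ((t - 1) / d)
    have hd0 : (0 : ℝ) < d := by linarith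
    have := mul_le_mul_of_nonneg_right h hd0.le
    calc t + ((d : ℝ) - 1) = ((t - 1) / d + 1) * d := by
          rw [add_mul, div_mul_cancel₀ _ hd0.ne', one_mul]; ring
      _ ≤ Real.exp ((t - 1) / d) * d := this
  have hbase0 : (0 : ℝ) ≤ t + ((d : ℝ) - 1) := by linarith
  have hpow : (t + ((d : ℝ) - 1)) ^ p ≤ Real.exp ((t - 1) * p / d) * (d : ℝ) ^ p := by
    calc (t + ((d : ℝ) - 1)) ^ p ≤ (Real.exp ((t - 1) / d) * d) ^ p :=
          pow_le_pow_left₀ hbase0 hbase p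
      _ = Real.exp ((t - 1) * p / d) * (d : ℝ) ^ p := by
          rw [mul_pow, ← Real.exp_nat_mul]
          congr 1; ring
  calc (2 * r) ^ β * d * (t + ((d : ℝ) - 1)) ^ p
      ≤ (2 * r) ^ β * d * (Real.exp ((t - 1) * p / d) * (d : ℝ) ^ p) := by
        apply mul_le_mul_of_nonneg_left hpow; positivity
    _ = (2 * r) ^ β * d * Real.exp ((t - 1) * p / d) * (d : ℝ) ^ p := by ring
end
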